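/- arXiv:1309.7375 — 5 statements merged into one kernel-verified Lean document; each statement's English description precedes it below -/
import Mathlib

section
/- Let p ∈ [0,1], d ≥ 1 and s ≥ 1. If f(1), …, f(s) are s independent binomial random subcubes of Q_d with parameter p, then the probability that every pairwise intersection f(i) ∩ f(j) is non-empty (equivalently, that a given s-set of vertices induces an s-clique in the binomial random subcube intersection graph) equals (2((1+p)/2)^s − p^s)^d. -/
open MeasureTheory Filter

/-- A subcube of the hypercube `{0,1}^d`, encoded coordinatewise: `none` is a
free (`⋆`) coordinate, `some b` a coordinate fixed to `b`. -/
abbrev Subcube (d : ℕ) := Fin d → Option Bool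

/-- A point `x ∈ {0,1}^d` lies in the subcube `c`. -/
def memSubcube {d : ℕ} (x : Fin d → Bool) (c : Subcube d) : Prop :=
  ∀ i : Fin d, ∀ b : Bool, c i = some b → x i = b

/-- Two subcubes have non-empty intersection. -/
def subcubesIntersect {d : ℕ} (c₁ c₂ : Subcube d) : Prop :=
  ∃ x : Fin d → Bool, memSubcube x c₁ ∧ memSubcube x c₂

/-- The dimension of a subcube: the number of free (`⋆`) coordinates. -/
def subcubeDim {d : ℕ} (c : Subcube d) : ℕ :=
  (Finset.univ.filter fun i : Fin d => c i = none).card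

instance : MeasurableSpace (Option Bool) := ⊤

/-- The distribution of a single coordinate of a binomial random subcube with
parameter `p`: `⋆` with probability `p`, each of `0`, `1` with probability `(1-p)/2`. -/
noncomputable def coordMeasure (p : ℝ) : Measure (Option Bool) :=
  ENNReal.ofReal p • Measure.dirac (none : Option Bool)
    + ENNReal.ofReal ((1 - p) / 2) • Measure.dirac (some false)
    + ENNReal.ofReal ((1 - p) / 2) • Measure.dirac (some true)

/-- The distribution of a binomial random subcube of `Q_d` with parameter `p`. -/
noncomputable def cubeMeasure (d : ℕ) (p : ℝ) : Measure (Subcube d) :=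
  Measure.pi fun _ : Fin d => coordMeasure p

/-- The binomial random subcube intersection model `G_{V,d,p}`: an independent
binomial random subcube with parameter `p` for each vertex of `V`. -/
noncomputable def binomialModel (V : Type*) [Fintype V] (d : ℕ) (p : ℝ) :
    Measure (V → Subcube d) :=
  Measure.pi fun _ : V => cubeMeasure d p

/-- The uniform distribution on the `k`-dimensional subcubes of `Q_d`. -/
noncomputable def uniformCubeMeasure (d k : ℕ) : Measure (Subcube d) :=
  (Measure.count {c : Subcube d | subcubeDim c = k})⁻¹ •
    Measure.count.restrict {c : Subcube d | subcubeDim c = k}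

/-- The uniform random subcube intersection model `G_{V,d,k}`. -/
noncomputable def uniformModel (V : Type*) [Fintype V] (d k : ℕ) :
    Measure (V → Subcube d) :=
  Measure.pi fun _ : V => uniformCubeMeasure d k

/-- The intersection graph of the family of subcubes `f` contains a clique on
`s` vertices. -/
def hasClique {V : Type*} {d : ℕ} (f : V → Subcube d) (s : ℕ) : Prop :=
  ∃ T : Finset V, T.card = s ∧ ∀ u ∈ T, ∀ v ∈ T, subcubesIntersect (f u) (f v)

/-- The feature subcubes `f v`, `v ∈ V`, cover the ambient hypercube `Q_d`. -/
def coversCube {V : Type*} {d : ℕ} (f : V → Subcube d) : Prop :=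
  ∀ x : Fin d → Bool, ∃ v : V, memSubcube x (f v)

/-- `t_{K_s}(p) = -(1/s) log (2((1+p)/2)^s - p^s)`. -/
noncomputable def cliqueThreshold (p : ℝ) (s : ℕ) : ℝ :=
  -(1 / s) * Real.log (2 * ((1 + p) / 2) ^ s - p ^ s)


-- singleton class
instance : MeasurableSingletonClass (Option Bool) := ⟨fun _ => trivial⟩

lemma coordMeasure_apply (p : ℝ) (s : Set (Option Bool)) :
    coordMeasure p s = ENNReal.ofReal p * s.indicator 1 none
      + ENNReal.ofReal ((1 - p) / 2) * s.indicator 1 (some false)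
      + ENNReal.ofReal ((1 - p) / 2) * s.indicator 1 (some true) := by
  simp [coordMeasure, Measure.dirac_apply' _ (by trivial : MeasurableSet s)]

instance coordMeasure_finite (p : ℝ) : IsFiniteMeasure (coordMeasure p) := by
  constructor
  rw [coordMeasure_apply]
  simp [ENNReal.add_lt_top, ENNReal.ofReal_lt_top]

lemma measure_eq_sum_singleton {β : Type*} [MeasurableSpace β] [MeasurableSingletonClass β]
    (κ : Measure β) (s : Set β) (hs : s.Finite) :
    κ s = ∑ b ∈ hs.toFinset, κ {b} := by
  have h1 : s = ⋃ b ∈ hs.toFinset, {b} := by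
    simp [Set.biUnion_of_singleton, Set.Finite.coe_toFinset]
  conv_lhs => rw [h1]
  rw [measure_biUnion_finset]
  · intro b _ c _ hbc
    simp [Set.disjoint_singleton, hbc]
  · exact fun b _ => measurableSet_singleton b

lemma measure_ext_singleton {β : Type*} [Finite β] [MeasurableSpace β]
    [MeasurableSingletonClass β] {μ ν : Measure β} (h : ∀ b : β, μ {b} = ν {b}) : μ = ν := by
  ext s hs
  rw [measure_eq_sum_singleton μ s (Set.toFinite s),
    measure_eq_sum_singleton ν s (Set.toFinite s)]
  exact Finset.sum_congr rfl fun b _ => h b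

lemma pi_singleton {ι : Type*} [Fintype ι] {α : Type*} [MeasurableSpace α]
    (μ : ι → Measure α) [∀ i, SigmaFinite (μ i)] (g : ι → α) :
    Measure.pi μ {g} = ∏ i, μ i {g i} := by
  have : ({g} : Set (ι → α)) = Set.pi Set.univ (fun i => {g i}) := by
    ext h; simp [funext_iff, Set.mem_pi]
  rw [this, Measure.pi_pi]

lemma map_swap (p : ℝ) (d s : ℕ) :
    Measure.map (fun (f : Fin s → Subcube d) (k : Fin d) (v : Fin s) => f v k)
      (binomialModel (Fin s) d p)
    = Measure.pi (fun _ : Fin d => Measure.pi fun _ : Fin s => coordMeasure p) := by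
  have hT : Measurable (fun (f : Fin s → Subcube d) (k : Fin d) (v : Fin s) => f v k) := by
    refine measurable_pi_lambda _ fun k => measurable_pi_lambda _ fun v => ?_
    exact (measurable_pi_apply k).comp (measurable_pi_apply v)
  apply measure_ext_singleton
  intro m
  rw [Measure.map_apply hT (measurableSet_singleton m)]
  have hpre : (fun (f : Fin s → Subcube d) k v => f v k) ⁻¹' {m}
      = {fun v k => m k v} := by
    ext f
    simp only [Set.mem_preimage, Set.mem_singleton_iff, funext_iff]
    tauto
  rw [hpre]
  simp only [binomialModel, cubeMeasure, pi_singleton]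
  exact Finset.prod_comm

lemma optionBool_cases (a : Option Bool) : a = none ∨ a = some false ∨ a = some true := by
  rcases a with _ | b
  · exact Or.inl rfl
  · cases b
    · exact Or.inr (Or.inl rfl)
    · exact Or.inr (Or.inr rfl)

lemma mem_pairF_iff (a : Option Bool) :
    a ∈ ({none, some false} : Set (Option Bool)) ↔ a ≠ some true := by
  rcases optionBool_cases a with h | h | h <;> simp [h]

lemma mem_pairT_iff (a : Option Bool) :
    a ∈ ({none, some true} : Set (Option Bool)) ↔ a ≠ some false := by
  rcases optionBool_cases a with h | h | h <;> simp [h]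

lemma pairwise_intersect_iff {d s : ℕ} (f : Fin s → Subcube d) :
    (∀ i j : Fin s, subcubesIntersect (f i) (f j)) ↔
      ∀ k : Fin d, (∀ v, f v k ≠ some true) ∨ (∀ v, f v k ≠ some false) := by
  constructor
  · intro h k
    by_contra hc
    push_neg at hc
    obtain ⟨⟨u, hu⟩, ⟨v, hv⟩⟩ := hc
    obtain ⟨x, hxu, hxv⟩ := h u v
    have h1 := hxu k true hu
    have h2 := hxv k false hv
    rw [h1] at h2
    exact Bool.noConfusion h2
  · intro h i j
    refine ⟨fun k => ((f i k).getD ((f j k).getD false)), ?_, ?_⟩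
    · intro k b hb; simp [hb]
    · intro k b hb
      rcases hik : f i k with _ | b'
      · simp [hik, hb]
      · simp only [hik, Option.getD_some]
        rcases h k with hl | hr
        · have h1 : b' ≠ true := fun e => hl i (by rw [hik, e])
          have h2 : b ≠ true := fun e => hl j (by rw [hb, e])
          cases b <;> cases b' <;> simp_all
        · have h1 : b' ≠ false := fun e => hr i (by rw [hik, e])
          have h2 : b ≠ false := fun e => hr j (by rw [hb, e])
          cases b <;> cases b' <;> simp_all

lemma swap_measurable (d s : ℕ) :
    Measurable (fun (f : Fin s → Subcube d) (k : Fin d) (v : Fin s) => f v k) := by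
  refine measurable_pi_lambda _ fun k => measurable_pi_lambda _ fun v => ?_
  exact (measurable_pi_apply k).comp (measurable_pi_apply v)

lemma coordMeasure_pairF (p : ℝ) (hp0 : 0 ≤ p) (hp1 : p ≤ 1) :
    coordMeasure p {none, some false} = ENNReal.ofReal ((1 + p) / 2) := by
  rw [coordMeasure_apply, Set.indicator_of_mem (by simp) 1, Set.indicator_of_mem (by simp) 1,
    Set.indicator_of_notMem (by simp) 1]
  simp only [Pi.one_apply, mul_one, mul_zero, add_zero]
  rw [← ENNReal.ofReal_add hp0 (by linarith)]
  congr 1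
  ring

lemma coordMeasure_pairT (p : ℝ) (hp0 : 0 ≤ p) (hp1 : p ≤ 1) :
    coordMeasure p {none, some true} = ENNReal.ofReal ((1 + p) / 2) := by
  rw [coordMeasure_apply, Set.indicator_of_mem (by simp) 1, Set.indicator_of_notMem (by simp) 1,
    Set.indicator_of_mem (by simp) 1]
  simp only [Pi.one_apply, mul_one, mul_zero, add_zero]
  rw [← ENNReal.ofReal_add hp0 (by linarith)]
  congr 1
  ring

lemma coordMeasure_none (p : ℝ) : coordMeasure p {none} = ENNReal.ofReal p := by
  rw [coordMeasure_apply]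
  simp [Set.indicator_apply]


/-- The probability that `s` independent binomial random subcubes of `Q_d` with
parameter `p` pairwise intersect (i.e. that a given `s`-set of vertices induces an
`s`-clique in the binomial model) is `(2((1+p)/2)^s - p^s)^d`. -/
theorem binomial_clique_probability (p : ℝ) (hp0 : 0 ≤ p) (hp1 : p ≤ 1)
    (d s : ℕ) (hd : 1 ≤ d) (hs : 1 ≤ s) :
    binomialModel (Fin s) d p
        {f | ∀ i j : Fin s, subcubesIntersect (f i) (f j)} =
      ENNReal.ofReal ((2 * ((1 + p) / 2) ^ s - p ^ s) ^ d) := by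
  classical
  set q : ℝ := (1 + p) / 2 with hqdef
  have hq0 : (0:ℝ) ≤ q := by rw [hqdef]; linarith
  have hpq : p ≤ q := by rw [hqdef]; linarith
  have hps : p ^ s ≤ q ^ s := pow_le_pow_left₀ hp0 hpq s
  have hqs : (0:ℝ) ≤ q ^ s := pow_nonneg hq0 s
  have hr0 : (0:ℝ) ≤ 2 * q ^ s - p ^ s := by nlinarith
  set A : Set (Fin s → Option Bool) :=
    Set.pi Set.univ (fun _ => ({none, some false} : Set (Option Bool))) with hA
  set B : Set (Fin s → Option Bool) :=
    Set.pi Set.univ (fun _ => ({none, some true} : Set (Option Bool))) with hB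
  have hAm : MeasurableSet A := MeasurableSet.univ_pi fun _ => trivial
  have hBm : MeasurableSet B := MeasurableSet.univ_pi fun _ => trivial
  set ν : Measure (Fin s → Option Bool) := Measure.pi fun _ : Fin s => coordMeasure p with hν
  have hAval : ν A = ENNReal.ofReal q ^ s := by
    rw [hν, hA, Measure.pi_pi]
    simp [coordMeasure_pairF p hp0 hp1, hqdef]
  have hBval : ν B = ENNReal.ofReal q ^ s := by
    rw [hν, hB, Measure.pi_pi]
    simp [coordMeasure_pairT p hp0 hp1, hqdef]
  have hABset : A ∩ B = Set.pi Set.univ (fun _ : Fin s => ({none} : Set (Option Bool))) := by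
    rw [hA, hB, ← Set.pi_inter_distrib]
    ext g
    simp only [Set.mem_pi, Set.mem_univ, true_implies, Set.mem_inter_iff, Set.mem_singleton_iff,
      Set.mem_insert_iff]
    apply forall_congr'
    intro v
    rcases optionBool_cases (g v) with h | h | h <;> simp [h]
  have hABval : ν (A ∩ B) = ENNReal.ofReal p ^ s := by
    rw [hν, hABset, Measure.pi_pi]
    simp [coordMeasure_none p]
  have hUval : ν (A ∪ B) = ENNReal.ofReal (2 * q ^ s - p ^ s) := by
    have key := measure_union_add_inter (μ := ν) A hBm
    have hne : ν (A ∩ B) ≠ ⊤ := by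
      rw [hABval]; exact ENNReal.pow_ne_top ENNReal.ofReal_ne_top
    have h2 : ENNReal.ofReal (2 * q ^ s - p ^ s) + ν (A ∩ B) = ν A + ν B := by
      rw [hABval, hAval, hBval, ← ENNReal.ofReal_pow hp0, ← ENNReal.ofReal_pow hq0,
        ← ENNReal.ofReal_add hr0 (pow_nonneg hp0 s), ← ENNReal.ofReal_add hqs hqs]
      congr 1
      ring
    exact (ENNReal.add_left_inj hne).mp (key.trans h2.symm)
  have hEv : {f : Fin s → Subcube d | ∀ i j : Fin s, subcubesIntersect (f i) (f j)}
      = (fun (f : Fin s → Subcube d) (k : Fin d) (v : Fin s) => f v k) ⁻¹'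
        (Set.pi Set.univ (fun _ : Fin d => A ∪ B)) := by
    ext f
    simp only [Set.mem_setOf_eq, Set.mem_preimage, Set.mem_pi, Set.mem_univ, true_implies,
      Set.mem_union, hA, hB, mem_pairF_iff, mem_pairT_iff]
    exact pairwise_intersect_iff f
  have hE'm : MeasurableSet (Set.pi Set.univ fun _ : Fin d => A ∪ B) :=
    MeasurableSet.univ_pi fun _ => hAm.union hBm
  rw [hEv, ← Measure.map_apply (swap_measurable d s) hE'm, map_swap, ← hν, Measure.pi_pi]
  simp [hUval, ← ENNReal.ofReal_pow hr0]
end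

section
/- Let p ∈ (0,1) and s ∈ ℕ with s ≥ 1 be fixed, and set t_{K_s}(p) = log(2/(1+p)) − (1/s)·log(2 − (2p/(1+p))^s). Then t_{K_s}(p) is a threshold for the appearance of s-cliques in the binomial model: for every sequence of vertex sets V(d), the probability that G_{V(d),d,p} contains an s-clique tends to 0 as d → ∞ whenever |V(d)| ≤ e^{x d} for some fixed x < t_{K_s}(p), and tends to 1 as d → ∞ whenever |V(d)| ≥ e^{x d} for some fixed x > t_{K_s}(p). -/
open MeasureTheory Filter

namespace CTP
open Finset

/-! ### Indicator of a proposition -/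

open Classical in
noncomputable def ind (P : Prop) : ℝ := if P then 1 else 0

lemma ind_of {P : Prop} (h : P) : ind P = 1 := by simp [ind, h]
lemma ind_of_not {P : Prop} (h : ¬ P) : ind P = 0 := by simp [ind, h]
lemma ind_nonneg (P : Prop) : 0 ≤ ind P := by
  by_cases h : P <;> simp [ind, h]
lemma ind_le_one (P : Prop) : ind P ≤ 1 := by
  by_cases h : P <;> simp [ind, h]
lemma ind_and (P Q : Prop) : ind (P ∧ Q) = ind P * ind Q := by
  by_cases h : P <;> by_cases h' : Q <;> simp [ind, h, h']
lemma ind_or (P Q : Prop) : ind (P ∨ Q) = ind P + ind Q - ind (P ∧ Q) := by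
  by_cases h : P <;> by_cases h' : Q <;> simp [ind, h, h']
lemma ind_congr {P Q : Prop} (h : P ↔ Q) : ind P = ind Q := by
  by_cases hp : P
  · rw [ind_of hp, ind_of (h.mp hp)]
  · rw [ind_of_not hp, ind_of_not (fun hq => hp (h.mpr hq))]
lemma ind_sq (P : Prop) : ind P ^ 2 = ind P := by
  by_cases h : P <;> simp [ind, h]
lemma ind_prod {ι : Type*} (t : Finset ι) (Q : ι → Prop) :
    (∏ i ∈ t, ind (Q i)) = ind (∀ i ∈ t, Q i) := by
  classical
  induction t using Finset.induction with
  | empty => simp [ind_of]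
  | insert _ _ hx ih =>
      rename_i a t'
      rw [Finset.prod_insert hx, ih, ← ind_and]
      exact ind_congr (Finset.forall_mem_insert (a := a) (s := t') (p := Q)).symm

/-! ### Coordinate weights -/

noncomputable def w (p : ℝ) : Option Bool → ℝ
  | none => p
  | some _ => (1 - p) / 2

lemma w_nonneg {p : ℝ} (h0 : 0 ≤ p) (h1 : p ≤ 1) (c : Option Bool) : 0 ≤ w p c := by
  cases c
  · simpa [w] using h0
  · simp only [w]; linarith

lemma sum_w {p : ℝ} : ∑ c : Option Bool, w p c = 1 := by
  rw [Fintype.sum_option, Fintype.sum_bool]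
  simp only [w]; ring

/-! ### Measurability basics -/

lemma measurableSet_OB (s : Set (Option Bool)) : MeasurableSet s :=
  MeasurableSpace.measurableSet_top

instance : MeasurableSingletonClass (Option Bool) :=
  ⟨fun x => measurableSet_OB {x}⟩

lemma coordMeasure_singleton (p : ℝ) (c : Option Bool) :
    coordMeasure p {c} = ENNReal.ofReal (w p c) := by
  have hm : MeasurableSet ({c} : Set (Option Bool)) := measurableSet_OB _
  rw [coordMeasure]
  rw [Measure.add_apply, Measure.add_apply, Measure.smul_apply, Measure.smul_apply,
    Measure.smul_apply, Measure.dirac_apply' _ hm, Measure.dirac_apply' _ hm,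
    Measure.dirac_apply' _ hm]
  cases c with
  | none => simp [w, Set.indicator]
  | some b => cases b <;> simp [w, Set.indicator]

lemma coordMeasure_isProb {p : ℝ} (h0 : 0 ≤ p) (h1 : p ≤ 1) :
    IsProbabilityMeasure (coordMeasure p) := by
  constructor
  rw [coordMeasure]
  simp only [Measure.add_apply, Measure.smul_apply, smul_eq_mul,
    measure_univ, mul_one]
  rw [← ENNReal.ofReal_add (by linarith) (by linarith),
    ← ENNReal.ofReal_add (by linarith) (by linarith)]

  rw [show p + (1 - p) / 2 + (1 - p) / 2 = 1 by ring]
  exact ENNReal.ofReal_one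


/-! ### Point masses and the sum formula -/

variable {V : Type*} [Fintype V] [DecidableEq V] {d : ℕ}

noncomputable def W (p : ℝ) (f : V → Subcube d) : ℝ := ∏ v, ∏ i, w p (f v i)

lemma W_nonneg {p : ℝ} (h0 : 0 ≤ p) (h1 : p ≤ 1) (f : V → Subcube d) : 0 ≤ W p f :=
  Finset.prod_nonneg fun v _ => Finset.prod_nonneg fun i _ => w_nonneg h0 h1 _

lemma cubeMeasure_singleton {p : ℝ} (h0 : 0 ≤ p) (h1 : p ≤ 1) (c : Subcube d) :
    cubeMeasure d p {c} = ENNReal.ofReal (∏ i, w p (c i)) := by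
  haveI := coordMeasure_isProb h0 h1
  rw [cubeMeasure, ← Set.univ_pi_singleton c, Measure.pi_pi]
  rw [ENNReal.ofReal_prod_of_nonneg fun i _ => w_nonneg h0 h1 _]
  exact Finset.prod_congr rfl fun i _ => coordMeasure_singleton p (c i)

lemma binomialModel_singleton {p : ℝ} (h0 : 0 ≤ p) (h1 : p ≤ 1) (f : V → Subcube d) :
    binomialModel V d p {f} = ENNReal.ofReal (W p f) := by
  haveI := coordMeasure_isProb h0 h1
  haveI : IsProbabilityMeasure (cubeMeasure d p) := by unfold cubeMeasure; infer_instance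
  rw [binomialModel, ← Set.univ_pi_singleton f, Measure.pi_pi]
  rw [W, ENNReal.ofReal_prod_of_nonneg fun v _ =>
    Finset.prod_nonneg fun i _ => w_nonneg h0 h1 _]
  exact Finset.prod_congr rfl fun v _ => cubeMeasure_singleton h0 h1 (f v)

open Classical in
lemma binomialModel_apply {p : ℝ} (h0 : 0 ≤ p) (h1 : p ≤ 1) (S : Set (V → Subcube d)) :
    binomialModel V d p S = ENNReal.ofReal (∑ f : V → Subcube d, ind (f ∈ S) * W p f) := by
  have hS : S = ⋃ f ∈ (Finset.univ.filter (· ∈ S)), ({f} : Set (V → Subcube d)) := by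
    ext g; simp
  have key : binomialModel V d p S
      = ∑ f ∈ Finset.univ.filter (· ∈ S), binomialModel V d p {f} := by
    conv_lhs => rw [hS]
    exact measure_biUnion_finset
      (by intro f _ g _ hfg; simp [Function.onFun, Set.disjoint_singleton, hfg])
      (fun f _ => MeasurableSet.singleton f)
  rw [key, ENNReal.ofReal_sum_of_nonneg fun f _ =>
      mul_nonneg (ind_nonneg _) (W_nonneg h0 h1 f)]
  rw [← Finset.sum_filter_add_sum_filter_not Finset.univ (· ∈ S)]
  have h2 : ∑ f ∈ Finset.univ.filter (fun f => ¬ (f ∈ S)),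
      ENNReal.ofReal (ind (f ∈ S) * W p f) = 0 := by
    apply Finset.sum_eq_zero
    intro f hf
    rw [Finset.mem_filter] at hf
    rw [ind_of_not hf.2, zero_mul, ENNReal.ofReal_zero]
  rw [h2, add_zero]
  apply Finset.sum_congr rfl
  intro f hf
  rw [Finset.mem_filter] at hf
  rw [binomialModel_singleton h0 h1, ind_of hf.2, one_mul]

/-! ### Column and vertex factorization -/

noncomputable def Wcol (p : ℝ) (h : V → Option Bool) : ℝ := ∏ v, w p (h v)

lemma col_factor (p : ℝ) (P : Fin d → (V → Option Bool) → Prop) :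
    ∑ f : V → Subcube d, ind (∀ i, P i (fun v => f v i)) * W p f
      = ∏ i, ∑ h : V → Option Bool, ind (P i h) * Wcol p h := by
  rw [Finset.prod_univ_sum]
  rw [Fintype.piFinset_univ]
  refine Fintype.sum_equiv (Equiv.piComm fun (_ : V) (_ : Fin d) => Option Bool) _ _ ?_
  intro f
  have h1 : ind (∀ i, P i fun v => f v i) = ∏ i, ind (P i fun v => f v i) := by
    rw [ind_prod]
    exact ind_congr (by simp)
  have h2 : W p f = ∏ i, Wcol p (fun v => f v i) := by
    rw [W, Finset.prod_comm]
    rfl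
  rw [h1, h2, ← Finset.prod_mul_distrib]
  rfl

lemma vertex_factor (p : ℝ) (B : V → Finset (Option Bool)) :
    ∑ h : V → Option Bool, ind (∀ v, h v ∈ B v) * Wcol p h
      = ∏ v, ∑ c ∈ B v, w p c := by
  rw [Finset.prod_univ_sum]
  rw [← Finset.sum_filter_add_sum_filter_not Finset.univ (fun h : V → Option Bool => ∀ v, h v ∈ B v)]
  have h2 : ∑ h ∈ Finset.univ.filter (fun h : V → Option Bool => ¬ ∀ v, h v ∈ B v),
      ind (∀ v, h v ∈ B v) * Wcol p h = 0 := by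
    apply Finset.sum_eq_zero
    intro h hh
    rw [Finset.mem_filter] at hh
    rw [ind_of_not hh.2, zero_mul]
  rw [h2, add_zero]
  apply Finset.sum_nbij' (fun h => h) (fun h => h)
  · intro h hh
    rw [Finset.mem_filter] at hh
    rw [Fintype.mem_piFinset]
    exact hh.2
  · intro h hh
    rw [Fintype.mem_piFinset] at hh
    rw [Finset.mem_filter]
    exact ⟨Finset.mem_univ _, hh⟩
  · intro _ _; rfl
  · intro _ _; rfl
  · intro h hh
    rw [Finset.mem_filter] at hh
    rw [ind_of hh.2, one_mul, Wcol]


/-! ### Good columns and clique events -/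

def S0 : Finset (Option Bool) := {none, some false}
def S1 : Finset (Option Bool) := {none, some true}
def Sn : Finset (Option Bool) := {none}

noncomputable def sig (p : ℝ) (B : Finset (Option Bool)) : ℝ := ∑ c ∈ B, w p c

lemma sig_S0 (p : ℝ) : sig p S0 = (1 + p) / 2 := by
  simp [sig, S0, w]; ring
lemma sig_S1 (p : ℝ) : sig p S1 = (1 + p) / 2 := by
  simp [sig, S1, w]; ring
lemma sig_Sn (p : ℝ) : sig p Sn = p := by simp [sig, Sn, w]
lemma sig_univ (p : ℝ) : sig p Finset.univ = 1 := sum_w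

def Good (T : Finset V) (h : V → Option Bool) : Prop :=
  (∀ v ∈ T, h v ∈ S0) ∨ (∀ v ∈ T, h v ∈ S1)

/-- The event that `T` forms a clique, expressed columnwise. -/
def cliqueEvent (T : Finset V) : Set (V → Subcube d) :=
  {f | ∀ i, Good T (fun v => f v i)}

/-- rectangle sums -/
lemma rect_sum (p : ℝ) (T T' : Finset V) (B1 B2 : Finset (Option Bool)) :
    ∑ h : V → Option Bool,
      ind ((∀ v ∈ T, h v ∈ B1) ∧ (∀ v ∈ T', h v ∈ B2)) * Wcol p h
    = sig p (B1 ∩ B2) ^ (T ∩ T').card * sig p B1 ^ (T \ T').card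
        * sig p B2 ^ (T' \ T).card := by
  have e1 : ∀ h : V → Option Bool,
      ((∀ v ∈ T, h v ∈ B1) ∧ (∀ v ∈ T', h v ∈ B2)) ↔
      (∀ v, h v ∈ (if v ∈ T then B1 else Finset.univ) ∩ (if v ∈ T' then B2 else Finset.univ)) := by
    intro h
    constructor
    · rintro ⟨hA, hB⟩ v
      rw [Finset.mem_inter]
      constructor
      · by_cases hv : v ∈ T <;> simp [hv, hA v]
      · by_cases hv : v ∈ T' <;> simp [hv, hB v]
    · intro hh
      constructor
      · intro v hv
        have := hh v; rw [Finset.mem_inter] at this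
        simpa [hv] using this.1
      · intro v hv
        have := hh v; rw [Finset.mem_inter] at this
        simpa [hv] using this.2
  calc ∑ h : V → Option Bool,
      ind ((∀ v ∈ T, h v ∈ B1) ∧ (∀ v ∈ T', h v ∈ B2)) * Wcol p h
      = ∑ h : V → Option Bool,
        ind (∀ v, h v ∈ (if v ∈ T then B1 else Finset.univ) ∩ (if v ∈ T' then B2 else Finset.univ))
          * Wcol p h := by
        refine Finset.sum_congr rfl fun h _ => ?_
        rw [ind_congr (e1 h)]
    _ = ∏ v, sig p ((if v ∈ T then B1 else Finset.univ) ∩ (if v ∈ T' then B2 else Finset.univ)) := by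
        rw [vertex_factor]; rfl
    _ = sig p (B1 ∩ B2) ^ (T ∩ T').card * sig p B1 ^ (T \ T').card
        * sig p B2 ^ (T' \ T).card := by
        have hsplit : (Finset.univ : Finset V) = ((T ∩ T') ∪ (T \ T') ∪ (T' \ T)) ∪
            (Finset.univ \ (T ∪ T')) := by
          ext v
          simp only [Finset.mem_union, Finset.mem_inter, Finset.mem_sdiff, Finset.mem_univ,
            iff_true]
          tauto
        rw [hsplit]
        rw [Finset.prod_union, Finset.prod_union, Finset.prod_union]
        · have c1 : ∀ v ∈ T ∩ T', ((if v ∈ T then B1 else Finset.univ) ∩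
              (if v ∈ T' then B2 else Finset.univ)) = B1 ∩ B2 := by
            intro v hv; rw [Finset.mem_inter] at hv; simp [hv.1, hv.2]
          have c2 : ∀ v ∈ T \ T', ((if v ∈ T then B1 else Finset.univ) ∩
              (if v ∈ T' then B2 else Finset.univ)) = B1 := by
            intro v hv; rw [Finset.mem_sdiff] at hv; simp [hv.1, hv.2]
          have c3 : ∀ v ∈ T' \ T, ((if v ∈ T then B1 else Finset.univ) ∩
              (if v ∈ T' then B2 else Finset.univ)) = B2 := by
            intro v hv; rw [Finset.mem_sdiff] at hv; simp [hv.1, hv.2]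
          have c4 : ∀ v ∈ Finset.univ \ (T ∪ T'), ((if v ∈ T then B1 else Finset.univ) ∩
              (if v ∈ T' then B2 else Finset.univ)) = Finset.univ := by
            intro v hv
            rw [Finset.mem_sdiff, Finset.mem_union] at hv
            have h1 : v ∉ T := fun h => hv.2 (Or.inl h)
            have h2 : v ∉ T' := fun h => hv.2 (Or.inr h)
            simp [h1, h2]
          rw [Finset.prod_congr rfl fun v hv => congrArg (sig p) (c1 v hv),
            Finset.prod_congr rfl fun v hv => congrArg (sig p) (c2 v hv),
            Finset.prod_congr rfl fun v hv => congrArg (sig p) (c3 v hv),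
            Finset.prod_congr rfl fun v hv => congrArg (sig p) (c4 v hv)]
          simp [Finset.prod_const, sig_univ]
        · rw [Finset.disjoint_left]
          intro a ha hb
          simp only [Finset.mem_union, Finset.mem_inter, Finset.mem_sdiff, Finset.mem_univ,
            true_and] at ha hb
          tauto
        · rw [Finset.disjoint_left]
          intro a ha hb
          simp only [Finset.mem_union, Finset.mem_inter, Finset.mem_sdiff, Finset.mem_univ,
            true_and] at ha hb
          tauto
        · rw [Finset.disjoint_left]
          intro a ha hb
          simp only [Finset.mem_union, Finset.mem_inter, Finset.mem_sdiff, Finset.mem_univ,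
            true_and] at ha hb
          tauto


/-! ### The `muR` formula -/

noncomputable def muR (p : ℝ) (j k : ℕ) : ℝ :=
  2*((1+p)/2)^(j+2*k) + 2*((1+p)/2)^(2*k)*p^j - 4*((1+p)/2)^k*p^(j+k) + p^(j+2*k)

noncomputable def lamR (p : ℝ) (s : ℕ) : ℝ := 2*((1+p)/2)^s - p^s

lemma muR_zero_right (p : ℝ) (s : ℕ) : muR p s 0 = lamR p s := by
  simp only [muR, lamR, Nat.mul_zero, Nat.add_zero, pow_zero]
  ring

lemma good_ind (p : ℝ) (T : Finset V) (h : V → Option Bool) :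
    ind (Good T h) = ind (∀ v ∈ T, h v ∈ S0) + ind (∀ v ∈ T, h v ∈ S1)
      - ind (∀ v ∈ T, h v ∈ Sn) := by
  rw [Good, ind_or]
  congr 1
  apply ind_congr
  constructor
  · rintro ⟨hA, hB⟩ v hv
    have h0 := hA v hv
    have h1 := hB v hv
    simp only [S0, S1, Sn, Finset.mem_insert, Finset.mem_singleton] at h0 h1 ⊢
    rcases h0 with h0 | h0 <;> rcases h1 with h1 | h1 <;> simp_all
  · intro hn
    constructor <;> intro v hv <;> have := hn v hv <;>
      simp only [S0, S1, Sn, Finset.mem_insert, Finset.mem_singleton] at this ⊢ <;>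
      simp [this]

lemma inter_card_self (T : Finset V) : (T ∩ T).card = T.card := by rw [Finset.inter_self]

lemma good_pair_sum (p : ℝ) (T T' : Finset V) (k : ℕ)
    (hk1 : (T \ T').card = k) (hk2 : (T' \ T).card = k) :
    ∑ h : V → Option Bool, ind (Good T h ∧ Good T' h) * Wcol p h
      = muR p ((T ∩ T').card) k := by
  have expand : ∀ h : V → Option Bool,
      ind (Good T h ∧ Good T' h) * Wcol p h =
        (ind ((∀ v ∈ T, h v ∈ S0) ∧ (∀ v ∈ T', h v ∈ S0)) * Wcol p h
          + ind ((∀ v ∈ T, h v ∈ S0) ∧ (∀ v ∈ T', h v ∈ S1)) * Wcol p h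
          - ind ((∀ v ∈ T, h v ∈ S0) ∧ (∀ v ∈ T', h v ∈ Sn)) * Wcol p h)
        + (ind ((∀ v ∈ T, h v ∈ S1) ∧ (∀ v ∈ T', h v ∈ S0)) * Wcol p h
          + ind ((∀ v ∈ T, h v ∈ S1) ∧ (∀ v ∈ T', h v ∈ S1)) * Wcol p h
          - ind ((∀ v ∈ T, h v ∈ S1) ∧ (∀ v ∈ T', h v ∈ Sn)) * Wcol p h)
        - (ind ((∀ v ∈ T, h v ∈ Sn) ∧ (∀ v ∈ T', h v ∈ S0)) * Wcol p h
          + ind ((∀ v ∈ T, h v ∈ Sn) ∧ (∀ v ∈ T', h v ∈ S1)) * Wcol p h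
          - ind ((∀ v ∈ T, h v ∈ Sn) ∧ (∀ v ∈ T', h v ∈ Sn)) * Wcol p h) := by
    intro h
    simp only [ind_and]
    rw [good_ind p T h, good_ind p T' h]
    ring
  rw [Finset.sum_congr rfl fun h _ => expand h]
  simp only [Finset.sum_add_distrib, Finset.sum_sub_distrib]
  rw [rect_sum, rect_sum, rect_sum, rect_sum, rect_sum, rect_sum, rect_sum, rect_sum, rect_sum]
  have i00 : S0 ∩ S0 = S0 := Finset.inter_self _
  have i11 : S1 ∩ S1 = S1 := Finset.inter_self _
  have i01 : S0 ∩ S1 = Sn := by decide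
  have i10 : S1 ∩ S0 = Sn := by decide
  have i0n : S0 ∩ Sn = Sn := by decide
  have i1n : S1 ∩ Sn = Sn := by decide
  have in0 : Sn ∩ S0 = Sn := by decide
  have in1 : Sn ∩ S1 = Sn := by decide
  have inn : Sn ∩ Sn = Sn := Finset.inter_self _
  rw [i00, i11, i01, i10, i0n, i1n, in0, in1, inn]
  rw [sig_S0, sig_S1, sig_Sn, hk1, hk2]
  rw [muR]
  ring

/-! ### Measures of clique events -/

lemma cliqueEvent_inter_measure {p : ℝ} (h0 : 0 ≤ p) (h1 : p ≤ 1)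
    (T T' : Finset V) (k : ℕ) (hk1 : (T \ T').card = k) (hk2 : (T' \ T).card = k) :
    binomialModel V d p (cliqueEvent T ∩ cliqueEvent T')
      = ENNReal.ofReal ((muR p ((T ∩ T').card) k) ^ d) := by
  rw [binomialModel_apply h0 h1]
  congr 1
  have mem_iff : ∀ f : V → Subcube d,
      (f ∈ cliqueEvent T ∩ cliqueEvent T') ↔
        ∀ i, (fun h => Good T h ∧ Good T' h) ((fun v => f v i)) := by
    intro f
    simp only [cliqueEvent, Set.mem_inter_iff, Set.mem_setOf_eq]
    constructor
    · rintro ⟨hA, hB⟩ i; exact ⟨hA i, hB i⟩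
    · intro hAB; exact ⟨fun i => (hAB i).1, fun i => (hAB i).2⟩
  rw [Finset.sum_congr rfl fun f _ => by rw [ind_congr (mem_iff f)]]
  rw [col_factor p (fun _ h => Good T h ∧ Good T' h)]
  rw [Finset.prod_congr rfl fun (i : Fin d) _ => good_pair_sum p T T' k hk1 hk2]
  rw [Finset.prod_const, Finset.card_univ, Fintype.card_fin]

lemma cliqueEvent_measure {p : ℝ} (h0 : 0 ≤ p) (h1 : p ≤ 1) (T : Finset V) :
    binomialModel V d p (cliqueEvent T) = ENNReal.ofReal ((lamR p T.card) ^ d) := by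
  have := cliqueEvent_inter_measure (d := d) h0 h1 T T 0 (by simp) (by simp)
  rw [Set.inter_self] at this
  rw [this, inter_card_self, muR_zero_right]

/-! ### hasClique as a union of clique events -/

lemma pairwise_iff_good (T : Finset V) (f : V → Subcube d) :
    (∀ u ∈ T, ∀ v ∈ T, subcubesIntersect (f u) (f v)) ↔
      ∀ i, Good T (fun v => f v i) := by
  constructor
  · intro hpair i
    by_contra hbad
    rw [Good] at hbad
    push_neg at hbad
    obtain ⟨⟨u, hu, hu0⟩, ⟨v, hv, hv1⟩⟩ := hbad
    have hut : f u i = some true := by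
      rcases h : f u i with _ | b
      · exact absurd (by simp [S0, h]) hu0
      · cases b
        · exact absurd (by simp [S0, h]) hu0
        · rfl
    have hvf : f v i = some false := by
      rcases h : f v i with _ | b
      · exact absurd (by simp [S1, h]) hv1
      · cases b
        · rfl
        · exact absurd (by simp [S1, h]) hv1
    obtain ⟨x, hxu, hxv⟩ := hpair u hu v hv
    have e1 := hxu i true hut
    have e2 := hxv i false hvf
    rw [e1] at e2
    exact Bool.noConfusion e2
  · intro hcol u hu v hv
    refine ⟨fun i => (f u i).getD ((f v i).getD false), ?_, ?_⟩
    · intro i b hb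
      simp [hb]
    · intro i b hb
      rcases h : f u i with _ | b'
      · simp [h, hb]
      · simp only [h, Option.getD_some]
        rcases hcol i with hg | hg
        · have h1 := hg u hu
          have h2 := hg v hv
          simp only [S0, Finset.mem_insert, Finset.mem_singleton, h, hb] at h1 h2
          simp_all
        · have h1 := hg u hu
          have h2 := hg v hv
          simp only [S1, Finset.mem_insert, Finset.mem_singleton, h, hb] at h1 h2
          simp_all

lemma hasClique_eq_union (s : ℕ) :
    {f : V → Subcube d | hasClique f s}
      = ⋃ T ∈ Finset.univ.powersetCard s, cliqueEvent T := by
  ext f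
  simp only [Set.mem_setOf_eq, Set.mem_iUnion, hasClique]
  constructor
  · rintro ⟨T, hcard, hpair⟩
    exact ⟨T, by simp [Finset.mem_powersetCard_univ, hcard],
      fun i => (pairwise_iff_good T f).mp hpair i⟩
  · rintro ⟨T, hT, hE⟩
    rw [Finset.mem_powersetCard_univ] at hT
    exact ⟨T, hT, (pairwise_iff_good T f).mpr hE⟩


/-! ### Analytic facts about `muR` and `lamR` -/

section Analytic

variable {p : ℝ}

lemma half_pos' (hp0 : 0 < p) : 0 < (1+p)/2 := by linarith
lemma lt_half (hp1 : p < 1) : p < (1+p)/2 := by linarith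
lemma half_lt_one (hp1 : p < 1) : (1+p)/2 < 1 := by linarith

lemma muR_pos (hp0 : 0 < p) (hp1 : p < 1) (j k : ℕ) : 0 < muR p j k := by
  set a : ℝ := (1+p)/2 with ha
  have ha0 : 0 < a := half_pos' hp0
  have hpa : p ≤ a := (lt_half hp1).le
  have key : muR p j k = p^(j+2*k) + 2*a^k*(a^(j+k) - p^(j+k)) + 2*a^k*p^j*(a^k - p^k) := by
    rw [muR]; ring
  rw [key]
  have h1 : p^(j+k) ≤ a^(j+k) := pow_le_pow_left₀ hp0.le hpa _
  have h2 : p^k ≤ a^k := pow_le_pow_left₀ hp0.le hpa _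
  have h3 : 0 < p^(j+2*k) := pow_pos hp0 _
  have h4 : 0 < a^k := pow_pos ha0 _
  have h5 : 0 < p^j := pow_pos hp0 _
  nlinarith [mul_nonneg h4.le (sub_nonneg.mpr h1),
    mul_nonneg (mul_nonneg h4.le h5.le) (sub_nonneg.mpr h2)]

lemma lamR_pos (hp0 : 0 < p) (hp1 : p < 1) (s : ℕ) : 0 < lamR p s := by
  have := muR_pos hp0 hp1 s 0
  rwa [muR_zero_right] at this

lemma lamR_le_one (hp0 : 0 < p) (hp1 : p < 1) (s : ℕ) : lamR p s ≤ 1 := by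
  induction s with
  | zero => norm_num [lamR]
  | succ s ih =>
      have key : lamR p (s+1) = lamR p s + (1-p)*(p^s - ((1+p)/2)^s) := by
        rw [lamR, lamR]; ring
      have h1 : p^s ≤ ((1+p)/2)^s := pow_le_pow_left₀ hp0.le (lt_half hp1).le _
      nlinarith

lemma muR_zero_left (p : ℝ) (s : ℕ) : muR p 0 s = (lamR p s)^2 := by
  rw [muR, lamR]; ring

/-- The core bracket inequality. -/
lemma bracket_core {r u v m : ℝ} (hr : 0 < r) (hu0 : 0 ≤ u) (hu1 : u ≤ 1)
    (hv0 : 0 ≤ v) (hvm : v ≤ m) (huv : u * v = m^2) :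
    (2 - 4*m + 2*u + v)^2 ≤ (2 - 4*m + 2*(u/r) + v*r) * (2 - 4*m + 2*(u*r) + v/r) := by
  have hm0 : 0 ≤ m := le_trans hv0 hvm
  have factor : (2 - 4*m + 2*(u/r) + v*r) * (2 - 4*m + 2*(u*r) + v/r)
      - (2 - 4*m + 2*u + v)^2
      = ((r-1)^2 * (((2-4*m)*(2*u+v))*r + 2*(u*v)*(r+1)^2)) / r^2 := by
    field_simp
    ring
  have bracket : 0 ≤ ((2-4*m)*(2*u+v))*r + 2*(u*v)*(r+1)^2 := by
    rcases le_or_gt m (1/2) with hm | hm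
    · have h1 : 0 ≤ (2-4*m)*(2*u+v) := by nlinarith
      nlinarith [sq_nonneg (r+1), mul_nonneg hu0 hv0]
    · -- m > 1/2 : use (4m-2)(2u+v) ≤ (4m-2)(2+m) ≤ 8m² and 2uv(r+1)² ≥ 8m²r
      have h2 : (4*m-2)*(2*u+v) ≤ (4*m-2)*(2+m) := by nlinarith
      have h3 : (4*m-2)*(2+m) ≤ 8*m^2 := by nlinarith
      have h4 : 2*(u*v)*(r+1)^2 ≥ 8*m^2*r := by
        rw [huv]; nlinarith [sq_nonneg (r-1), sq_nonneg m]
      nlinarith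
  nlinarith [sq_nonneg (r-1), pow_pos hr 2,
    div_nonneg (mul_nonneg (sq_nonneg (r-1)) bracket) (pow_pos hr 2).le,
    factor]

lemma muAbs_logconvex (a r : ℝ) (ha0 : 0 < a) (hr0 : 0 < r) (hr1 : r < 1) (j k : ℕ) :
    (2*a^((j+1)+2*(k+1)) + 2*a^(2*(k+1))*(a*r)^(j+1) - 4*a^(k+1)*(a*r)^((j+1)+(k+1))
        + (a*r)^((j+1)+2*(k+1)))^2
      ≤ (2*a^(j+2*(k+2)) + 2*a^(2*(k+2))*(a*r)^j - 4*a^(k+2)*(a*r)^(j+(k+2)) + (a*r)^(j+2*(k+2)))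
        * (2*a^((j+2)+2*k) + 2*a^(2*k)*(a*r)^(j+2) - 4*a^k*(a*r)^((j+2)+k) + (a*r)^((j+2)+2*k)) := by
  have hu0 : (0:ℝ) ≤ r^(j+1) := pow_nonneg hr0.le _
  have hv0 : (0:ℝ) ≤ r^(j+2*k+3) := pow_nonneg hr0.le _
  have hu1 : r^(j+1) ≤ 1 := pow_le_one₀ hr0.le hr1.le
  have hvm : r^(j+2*k+3) ≤ r^(j+k+2) := pow_le_pow_of_le_one hr0.le hr1.le (by omega)
  have huv : r^(j+1) * r^(j+2*k+3) = (r^(j+k+2))^2 := by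
    rw [← pow_add, ← pow_mul]
    congr 1
    ring
  have core := bracket_core (r := r) (u := r^(j+1)) (v := r^(j+2*k+3)) (m := r^(j+k+2))
    hr0 hu0 hu1 hv0 hvm huv
  have hud : r^(j+1) / r = r^j := by
    rw [pow_succ, mul_div_assoc, div_self hr0.ne', mul_one]
  have hvr : r^(j+2*k+3) * r = r^(j+2*k+4) := by rw [← pow_succ]
  have hur : r^(j+1) * r = r^(j+2) := by rw [← pow_succ]
  have hvd : r^(j+2*k+3) / r = r^(j+2*k+2) := by
    rw [show j+2*k+3 = (j+2*k+2)+1 by ring, pow_succ, mul_div_assoc,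
      div_self hr0.ne', mul_one]
  rw [hud, hvr, hur, hvd] at core
  have eq1 : 2*a^(j+2*(k+2)) + 2*a^(2*(k+2))*(a*r)^j - 4*a^(k+2)*(a*r)^(j+(k+2))
      + (a*r)^(j+2*(k+2))
      = a^(j+2*k+4) * (2 - 4*(r^(j+k+2)) + 2*(r^j) + r^(j+2*k+4)) := by
    simp only [mul_pow]
    ring
  have eq2 : 2*a^((j+2)+2*k) + 2*a^(2*k)*(a*r)^(j+2) - 4*a^k*(a*r)^((j+2)+k) + (a*r)^((j+2)+2*k)
      = a^(j+2*k+2) * (2 - 4*(r^(j+k+2)) + 2*(r^(j+2)) + r^(j+2*k+2)) := by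
    simp only [mul_pow]
    ring
  have eq3 : 2*a^((j+1)+2*(k+1)) + 2*a^(2*(k+1))*(a*r)^(j+1) - 4*a^(k+1)*(a*r)^((j+1)+(k+1))
      + (a*r)^((j+1)+2*(k+1))
      = a^(j+2*k+3) * (2 - 4*(r^(j+k+2)) + 2*(r^(j+1)) + r^(j+2*k+3)) := by
    simp only [mul_pow]
    ring
  rw [eq1, eq2, eq3]
  have hsc : a^(j+2*k+4) * a^(j+2*k+2) = (a^(j+2*k+3))^2 := by
    rw [← pow_add, ← pow_mul]
    congr 1
    ring
  calc (a^(j+2*k+3) * (2 - 4*(r^(j+k+2)) + 2*(r^(j+1)) + r^(j+2*k+3)))^2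
      = (a^(j+2*k+3))^2 * (2 - 4*(r^(j+k+2)) + 2*(r^(j+1)) + r^(j+2*k+3))^2 := by ring
    _ ≤ (a^(j+2*k+3))^2 * ((2 - 4*(r^(j+k+2)) + 2*(r^j) + r^(j+2*k+4))
          * (2 - 4*(r^(j+k+2)) + 2*(r^(j+2)) + r^(j+2*k+2))) := by
        apply mul_le_mul_of_nonneg_left core (sq_nonneg _)
    _ = a^(j+2*k+4) * (2 - 4*(r^(j+k+2)) + 2*(r^j) + r^(j+2*k+4))
          * (a^(j+2*k+2) * (2 - 4*(r^(j+k+2)) + 2*(r^(j+2)) + r^(j+2*k+2))) := by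
        rw [← hsc]; ring

lemma muR_logconvex (hp0 : 0 < p) (hp1 : p < 1) (j k : ℕ) :
    (muR p (j+1) (k+1))^2 ≤ muR p j (k+2) * muR p (j+2) k := by
  have ha0 : (0:ℝ) < (1+p)/2 := half_pos' hp0
  have hpa : p < (1+p)/2 := lt_half hp1
  have hr0 : 0 < p / ((1+p)/2) := div_pos hp0 ha0
  have hr1 : p / ((1+p)/2) < 1 := (div_lt_one ha0).mpr hpa
  have har : (1+p)/2 * (p / ((1+p)/2)) = p := by
    field_simp
  have main := muAbs_logconvex ((1+p)/2) (p / ((1+p)/2)) ha0 hr0 hr1 j k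
  rw [har] at main
  simpa only [muR] using main

/-- chord bound for log-convex positive sequences -/
lemma chord_bound {s : ℕ} (c : ℕ → ℝ) (hpos : ∀ i, i ≤ s → 0 < c i)
    (hconv : ∀ i, i + 2 ≤ s → (c (i+1))^2 ≤ c i * c (i+2)) :
    ∀ j, j ≤ s → (c j)^s ≤ (c 0)^(s-j) * (c s)^j := by
  classical
  set q : ℕ → ℝ := fun i => c (i+1) / c i with hq
  have hqpos : ∀ i, i + 1 ≤ s → 0 < q i := fun i hi =>
    div_pos (hpos _ hi) (hpos _ (by omega))
  have hqstep : ∀ i, i + 2 ≤ s → q i ≤ q (i+1) := by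
    intro i hi
    rw [hq]
    have h0 : 0 < c i := hpos _ (by omega)
    have h1 : 0 < c (i+1) := hpos _ (by omega)
    rw [div_le_div_iff₀ h0 h1]
    nlinarith [hconv i hi]
  have hqmono : ∀ i j', i ≤ j' → j' + 1 ≤ s → q i ≤ q j' := by
    intro i j' hij hj
    induction j' with
    | zero =>
        have : i = 0 := by omega
        rw [this]
    | succ j'' ih =>
        rcases Nat.lt_or_ge i (j''+1) with h | h
        · exact le_trans (ih (by omega) (by omega)) (hqstep j'' (by omega))
        · have : i = j'' + 1 := by omega
          rw [this]
  have hprod : ∀ j, j ≤ s → c j = c 0 * ∏ i ∈ Finset.range j, q i := by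
    intro j hj
    induction j with
    | zero => simp
    | succ j' ih =>
        rw [Finset.prod_range_succ, ← mul_assoc, ← ih (by omega), hq]
        field_simp [(hpos j' (by omega)).ne']
  intro j hj
  rcases Nat.eq_or_lt_of_le hj with rfl | hjs
  · rw [Nat.sub_self, pow_zero, one_mul]
  rcases Nat.eq_zero_or_pos j with rfl | hj0
  · rw [Nat.sub_zero, pow_zero, mul_one]
  -- 1 ≤ j ≤ s-1
  obtain ⟨jj, rfl⟩ : ∃ jj, j = jj + 1 := ⟨j - 1, by omega⟩
  have hjs' : jj + 2 ≤ s := by omega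
  have hprod_pos : 0 < ∏ i ∈ Finset.range (jj+1), q i :=
    Finset.prod_pos fun i hi => hqpos i (by
      rw [Finset.mem_range] at hi; omega)
  have key : (∏ i ∈ Finset.range (jj+1), q i)^s ≤ (∏ i ∈ Finset.range s, q i)^(jj+1) := by
    have hsplit : (∏ i ∈ Finset.range (jj+1), q i) * ∏ i ∈ Finset.Ico (jj+1) s, q i
        = ∏ i ∈ Finset.range s, q i :=
      Finset.prod_range_mul_prod_Ico q (by omega)
    have hA : ∏ i ∈ Finset.range (jj+1), q i ≤ (q jj)^(jj+1) := by
      calc ∏ i ∈ Finset.range (jj+1), q i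
          ≤ ∏ _i ∈ Finset.range (jj+1), q jj := by
            apply Finset.prod_le_prod
            · intro i hi; exact (hqpos i (by rw [Finset.mem_range] at hi; omega)).le
            · intro i hi
              rw [Finset.mem_range] at hi
              exact hqmono i jj (by omega) (by omega)
        _ = (q jj)^(jj+1) := by rw [Finset.prod_const, Finset.card_range]
    have hB : (q jj)^(s-(jj+1)) ≤ ∏ i ∈ Finset.Ico (jj+1) s, q i := by
      calc (q jj)^(s-(jj+1)) = ∏ _i ∈ Finset.Ico (jj+1) s, q jj := by
            rw [Finset.prod_const, Nat.card_Ico]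
        _ ≤ ∏ i ∈ Finset.Ico (jj+1) s, q i := by
            apply Finset.prod_le_prod
            · intro i _; exact (hqpos jj (by omega)).le
            · intro i hi
              rw [Finset.mem_Ico] at hi
              exact hqmono jj i (by omega) (by omega)
    have hqj_pos : 0 < q jj := hqpos jj (by omega)
    calc (∏ i ∈ Finset.range (jj+1), q i)^s
        = (∏ i ∈ Finset.range (jj+1), q i)^(jj+1)
            * (∏ i ∈ Finset.range (jj+1), q i)^(s-(jj+1)) := by
          rw [← pow_add]; congr 1; omega
      _ ≤ (∏ i ∈ Finset.range (jj+1), q i)^(jj+1) * ((q jj)^(jj+1))^(s-(jj+1)) := by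
          apply mul_le_mul_of_nonneg_left _ (pow_nonneg hprod_pos.le _)
          exact pow_le_pow_left₀ hprod_pos.le hA _
      _ = (∏ i ∈ Finset.range (jj+1), q i)^(jj+1) * ((q jj)^(s-(jj+1)))^(jj+1) := by
          rw [← pow_mul, ← pow_mul, Nat.mul_comm]
      _ ≤ (∏ i ∈ Finset.range (jj+1), q i)^(jj+1) * (∏ i ∈ Finset.Ico (jj+1) s, q i)^(jj+1) := by
          apply mul_le_mul_of_nonneg_left _ (pow_nonneg hprod_pos.le _)
          exact pow_le_pow_left₀ (pow_nonneg hqj_pos.le _) hB _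
      _ = (∏ i ∈ Finset.range s, q i)^(jj+1) := by rw [← mul_pow, hsplit]
  have hc0 : 0 < c 0 := hpos 0 (by omega)
  calc (c (jj+1))^s = (c 0 * ∏ i ∈ Finset.range (jj+1), q i)^s := by
        rw [← hprod _ hj]
    _ = (c 0)^s * (∏ i ∈ Finset.range (jj+1), q i)^s := mul_pow _ _ _
    _ ≤ (c 0)^s * (∏ i ∈ Finset.range s, q i)^(jj+1) := by
        apply mul_le_mul_of_nonneg_left key (pow_nonneg hc0.le _)
    _ = (c 0)^(s-(jj+1)) * ((c 0)^(jj+1) * (∏ i ∈ Finset.range s, q i)^(jj+1)) := by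
        rw [← mul_assoc, ← pow_add]; congr 2; omega
    _ = (c 0)^(s-(jj+1)) * (c 0 * ∏ i ∈ Finset.range s, q i)^(jj+1) := by
        rw [mul_pow]
    _ = (c 0)^(s-(jj+1)) * (c s)^(jj+1) := by rw [← hprod s le_rfl]

/-- the key estimate : `muR p j (s-j) ^ s ≤ lamR p s ^ (2s - j)` -/
lemma muR_le_lamR (hp0 : 0 < p) (hp1 : p < 1) (s j : ℕ) (hj : j ≤ s) :
    (muR p j (s-j))^s ≤ (lamR p s)^(2*s-j) := by
  have main := chord_bound (s := s) (fun i => muR p i (s-i))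
    (fun i hi => muR_pos hp0 hp1 _ _)
    (fun i hi => by
      have h1 : s - i = (s - (i+2)) + 2 := by omega
      have h2 : s - (i+1) = (s - (i+2)) + 1 := by omega
      show (muR p (i+1) (s-(i+1)))^2 ≤ muR p i (s-i) * muR p (i+2) (s-(i+2))
      rw [h1, h2]
      exact muR_logconvex hp0 hp1 i (s - (i+2)))
    j hj
  rw [Nat.sub_self, muR_zero_right, muR_zero_left] at main
  calc (muR p j (s-j))^s ≤ ((lamR p s)^2)^(s-j) * (lamR p s)^j := main
    _ = (lamR p s)^(2*s-j) := by
        rw [← pow_mul, ← pow_add]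
        congr 1
        omega

end Analytic


/-! ### Real-valued probabilities and the second-moment inequality -/

noncomputable def prR (p : ℝ) (S : Set (V → Subcube d)) : ℝ :=
  ∑ f : V → Subcube d, ind (f ∈ S) * W p f

lemma prR_nonneg {p : ℝ} (h0 : 0 ≤ p) (h1 : p ≤ 1) (S : Set (V → Subcube d)) :
    0 ≤ prR p S :=
  Finset.sum_nonneg fun f _ => mul_nonneg (ind_nonneg _) (W_nonneg h0 h1 f)

lemma prR_eq {p : ℝ} (h0 : 0 ≤ p) (h1 : p ≤ 1) (S : Set (V → Subcube d)) :
    (binomialModel V d p S).toReal = prR p S := by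
  rw [binomialModel_apply h0 h1, ENNReal.toReal_ofReal]
  · rfl
  · exact prR_nonneg h0 h1 S

lemma second_moment {p : ℝ} (h0 : 0 ≤ p) (h1 : p ≤ 1)
    (𝒯 : Finset (Finset V)) (E : Finset V → Set (V → Subcube d)) :
    (∑ T ∈ 𝒯, prR p (E T))^2
      ≤ prR p (⋃ T ∈ 𝒯, E T) * ∑ T ∈ 𝒯, ∑ T' ∈ 𝒯, prR p (E T ∩ E T') := by
  classical
  set U : Set (V → Subcube d) := ⋃ T ∈ 𝒯, E T with hU
  set X : (V → Subcube d) → ℝ := fun f => ∑ T ∈ 𝒯, ind (f ∈ E T) with hX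
  have hWnn : ∀ f : V → Subcube d, 0 ≤ W p f := fun f => W_nonneg h0 h1 f
  have hXU : ∀ f : V → Subcube d, f ∉ U → X f = 0 := by
    intro f hf
    apply Finset.sum_eq_zero
    intro T hT
    apply ind_of_not
    intro hfE
    exact hf (Set.mem_biUnion hT hfE)
  have e1 : ∑ T ∈ 𝒯, prR p (E T) = ∑ f : V → Subcube d, X f * W p f := by
    rw [hX]
    simp only [prR, Finset.sum_mul]
    rw [Finset.sum_comm]
  have e2 : ∑ T ∈ 𝒯, ∑ T' ∈ 𝒯, prR p (E T ∩ E T')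
      = ∑ f : V → Subcube d, X f^2 * W p f := by
    have inner : ∀ f : V → Subcube d, X f^2 * W p f
        = ∑ T ∈ 𝒯, ∑ T' ∈ 𝒯, ind (f ∈ E T) * ind (f ∈ E T') * W p f := by
      intro f
      rw [hX, sq, Finset.sum_mul_sum 𝒯 𝒯 (fun T => ind (f ∈ E T)) (fun T' => ind (f ∈ E T'))]
      rw [Finset.sum_mul]
      exact Finset.sum_congr rfl fun T _ => Finset.sum_mul _ _ _
    have step1 : ∀ T T' : Finset V, prR p (E T ∩ E T')
        = ∑ f : V → Subcube d, ind (f ∈ E T) * ind (f ∈ E T') * W p f := by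
      intro T T'
      apply Finset.sum_congr rfl
      intro f _
      rw [ind_congr (Set.mem_inter_iff f (E T) (E T')), ind_and]
    calc ∑ T ∈ 𝒯, ∑ T' ∈ 𝒯, prR p (E T ∩ E T')
        = ∑ T ∈ 𝒯, ∑ T' ∈ 𝒯, ∑ f : V → Subcube d,
            ind (f ∈ E T) * ind (f ∈ E T') * W p f :=
          Finset.sum_congr rfl fun T _ => Finset.sum_congr rfl fun T' _ => step1 T T'
      _ = ∑ T ∈ 𝒯, ∑ f : V → Subcube d, ∑ T' ∈ 𝒯,
            ind (f ∈ E T) * ind (f ∈ E T') * W p f :=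
          Finset.sum_congr rfl fun T _ => Finset.sum_comm
      _ = ∑ f : V → Subcube d, ∑ T ∈ 𝒯, ∑ T' ∈ 𝒯,
            ind (f ∈ E T) * ind (f ∈ E T') * W p f := Finset.sum_comm
      _ = ∑ f : V → Subcube d, X f^2 * W p f :=
          Finset.sum_congr rfl fun f _ => (inner f).symm
  have e3 : ∀ f : V → Subcube d,
      X f * W p f = Real.sqrt (ind (f ∈ U) * W p f) * (Real.sqrt (W p f) * X f) := by
    intro f
    by_cases hf : f ∈ U
    · rw [ind_of hf, one_mul]
      rw [show Real.sqrt (W p f) * (Real.sqrt (W p f) * X f)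
          = (Real.sqrt (W p f) * Real.sqrt (W p f)) * X f by ring,
        Real.mul_self_sqrt (hWnn f)]
      ring
    · rw [hXU f hf, ind_of_not hf, zero_mul, Real.sqrt_zero]
      ring
  rw [e1, e2]
  calc (∑ f : V → Subcube d, X f * W p f)^2
      = (∑ f : V → Subcube d,
          Real.sqrt (ind (f ∈ U) * W p f) * (Real.sqrt (W p f) * X f))^2 := by
        rw [Finset.sum_congr rfl fun f _ => e3 f]
    _ ≤ (∑ f : V → Subcube d, Real.sqrt (ind (f ∈ U) * W p f)^2)
          * ∑ f : V → Subcube d, (Real.sqrt (W p f) * X f)^2 :=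
        Finset.sum_mul_sq_le_sq_mul_sq _ _ _
    _ = prR p U * ∑ f : V → Subcube d, X f^2 * W p f := by
        congr 1
        · apply Finset.sum_congr rfl
          intro f _
          rw [Real.sq_sqrt (mul_nonneg (ind_nonneg _) (hWnn f))]
        · apply Finset.sum_congr rfl
          intro f _
          rw [mul_pow, Real.sq_sqrt (hWnn f)]
          ring


/-! ### Counting -/

lemma count_by_inter (s j : ℕ) (T : Finset V) (hT : T.card = s) :
    ((Finset.univ.powersetCard s).filter
        (fun T' : Finset V => (T ∩ T').card = j)).card
      ≤ s.choose j * (Fintype.card V).choose (s-j) := by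
  classical
  have hmaps : ∀ T' ∈ (Finset.univ.powersetCard s).filter
      (fun T' : Finset V => (T ∩ T').card = j),
      (T ∩ T', T' \ T) ∈ (T.powersetCard j) ×ˢ ((Finset.univ : Finset V).powersetCard (s-j)) := by
    intro T' hT'
    rw [Finset.mem_filter, Finset.mem_powersetCard_univ] at hT'
    obtain ⟨hcard, hj⟩ := hT'
    rw [Finset.mem_product, Finset.mem_powersetCard, Finset.mem_powersetCard_univ]
    refine ⟨⟨Finset.inter_subset_left, hj⟩, ?_⟩
    show (T' \ T).card = s - j
    have h1 : (T' \ T).card + (T' ∩ T).card = T'.card :=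
      Finset.card_sdiff_add_card_inter T' T
    rw [Finset.inter_comm] at h1
    omega
  have hinj : Set.InjOn (fun T' : Finset V => (T ∩ T', T' \ T))
      ((Finset.univ.powersetCard s).filter
        (fun T' : Finset V => (T ∩ T').card = j) : Finset (Finset V)) := by
    intro A hA B hB hEq
    rw [Prod.mk.injEq] at hEq
    obtain ⟨h1, h2⟩ := hEq
    ext v
    by_cases hv : v ∈ T
    · constructor
      · intro hvA
        have h3 : v ∈ T ∩ B := h1 ▸ (Finset.mem_inter.mpr ⟨hv, hvA⟩)
        exact (Finset.mem_inter.mp h3).2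
      · intro hvB
        have h3 : v ∈ T ∩ A := h1.symm ▸ (Finset.mem_inter.mpr ⟨hv, hvB⟩)
        exact (Finset.mem_inter.mp h3).2
    · constructor
      · intro hvA
        have h3 : v ∈ B \ T := h2 ▸ (Finset.mem_sdiff.mpr ⟨hvA, hv⟩)
        exact (Finset.mem_sdiff.mp h3).1
      · intro hvB
        have h3 : v ∈ A \ T := h2.symm ▸ (Finset.mem_sdiff.mpr ⟨hvB, hv⟩)
        exact (Finset.mem_sdiff.mp h3).1
  have key := Finset.card_le_card_of_injOn _ hmaps hinj
  rwa [Finset.card_product, Finset.card_powersetCard, Finset.card_powersetCard,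
    Finset.card_univ, hT] at key

lemma choose_le_two_pow (s j : ℕ) (hj : j ≤ s) : s.choose j ≤ 2^s := by
  calc s.choose j ≤ ∑ i ∈ Finset.range (s+1), s.choose i :=
        Finset.single_le_sum (fun i _ => Nat.zero_le _)
          (Finset.mem_range.mpr (by omega))
    _ = 2^s := Nat.sum_range_choose s

/-! ### The threshold identity -/

lemma threshold_eq {p : ℝ} (hp0 : 0 < p) (hp1 : p < 1) {s : ℕ} (hs : 1 ≤ s) :
    Real.log (2 / (1 + p)) - (1/(s:ℝ)) * Real.log (2 - (2*p/(1+p))^s)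
      = -(1/(s:ℝ)) * Real.log (lamR p s) := by
  have h1p : (0:ℝ) < 1 + p := by linarith
  have ha0 : (0:ℝ) < (1+p)/2 := by linarith
  have hs0 : (s:ℝ) ≠ 0 := Nat.cast_ne_zero.mpr (by omega)
  have hlam : 0 < lamR p s := lamR_pos hp0 hp1 s
  have hpow : (0:ℝ) < ((1+p)/2)^s := pow_pos ha0 s
  have harg : 2 - (2*p/(1+p))^s = lamR p s / ((1+p)/2)^s := by
    rw [lamR, show 2*p/(1+p) = p / ((1+p)/2) by field_simp]
    rw [div_pow, sub_div]
    congr 1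
    rw [mul_div_assoc, div_self hpow.ne', mul_one]
  rw [harg, Real.log_div hlam.ne' hpow.ne', Real.log_pow]
  rw [show (2:ℝ)/(1+p) = (((1+p)/2))⁻¹ by rw [inv_div]]
  rw [Real.log_inv]
  field_simp
  ring

/-! ### The 0-statement -/

lemma zero_side {p : ℝ} (hp0 : 0 < p) (hp1 : p < 1) {s : ℕ} (hs : 1 ≤ s)
    (n : ℕ → ℕ) (x : ℝ) (hx : x < -(1/(s:ℝ)) * Real.log (lamR p s))
    (hn : ∀ d : ℕ, (n d : ℝ) ≤ Real.exp (x * d)) :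
    Tendsto (fun d => binomialModel (Fin (n d)) d p {f | hasClique f s})
      atTop (nhds 0) := by
  have hlam0 : 0 < lamR p s := lamR_pos hp0 hp1 s
  set c : ℝ := (s:ℝ)*x + Real.log (lamR p s) with hc
  have hs0 : (0:ℝ) < (s:ℝ) := by
    have : (1:ℝ) ≤ (s:ℝ) := by exact_mod_cast hs
    linarith
  have hc0 : c < 0 := by
    rw [hc]
    have h2 : (s:ℝ) * x < (s:ℝ) * (-(1/(s:ℝ)) * Real.log (lamR p s)) :=
      (mul_lt_mul_iff_right₀ hs0).mpr hx
    have h3 : (s:ℝ) * (-(1/(s:ℝ)) * Real.log (lamR p s)) = - Real.log (lamR p s) := by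
      field_simp
    rw [h3] at h2
    linarith
  have bound : ∀ d : ℕ, binomialModel (Fin (n d)) d p {f | hasClique f s}
      ≤ ENNReal.ofReal (Real.exp (c * d)) := by
    intro d
    rw [hasClique_eq_union]
    have step1 : binomialModel (Fin (n d)) d p
        (⋃ T ∈ (Finset.univ : Finset (Fin (n d))).powersetCard s,
          cliqueEvent (d := d) T)
        ≤ ∑ T ∈ (Finset.univ : Finset (Fin (n d))).powersetCard s,
            binomialModel (Fin (n d)) d p (cliqueEvent (d := d) T) :=
      measure_biUnion_finset_le _ _
    have step2 : ∑ T ∈ (Finset.univ : Finset (Fin (n d))).powersetCard s,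
        binomialModel (Fin (n d)) d p (cliqueEvent (d := d) T)
        = ((Finset.univ : Finset (Fin (n d))).powersetCard s).card
            • ENNReal.ofReal ((lamR p s)^d) := by
      rw [Finset.sum_congr rfl (fun T hT => ?_), Finset.sum_const]
      rw [Finset.mem_powersetCard_univ] at hT
      rw [cliqueEvent_measure hp0.le hp1.le, hT]
    have step3 : ((Finset.univ : Finset (Fin (n d))).powersetCard s).card
          • ENNReal.ofReal ((lamR p s)^d)
        ≤ ENNReal.ofReal (Real.exp (c * d)) := by
      rw [Finset.card_powersetCard, Finset.card_univ, Fintype.card_fin]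
      rw [nsmul_eq_mul, ← ENNReal.ofReal_natCast, ← ENNReal.ofReal_mul (by positivity)]
      apply ENNReal.ofReal_le_ofReal
      calc ((n d).choose s : ℝ) * (lamR p s)^d
          ≤ ((n d)^s : ℝ) * (lamR p s)^d := by
            apply mul_le_mul_of_nonneg_right _ (by positivity)
            exact_mod_cast Nat.choose_le_pow (n d) s
        _ ≤ (Real.exp (x*d))^s * (lamR p s)^d := by
            apply mul_le_mul_of_nonneg_right _ (by positivity)
            apply pow_le_pow_left₀ (by positivity) (hn d)
        _ = Real.exp (c * d) := by
            rw [← Real.exp_log hlam0, ← Real.exp_nat_mul, ← Real.exp_nat_mul,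
              ← Real.exp_add]
            congr 1
            rw [hc]
            ring
    exact le_trans step1 (step2 ▸ step3)
  have hexp : Tendsto (fun d : ℕ => ENNReal.ofReal (Real.exp (c * d))) atTop (nhds 0) := by
    have h1 : Tendsto (fun d : ℕ => c * (d:ℝ)) atTop atBot := by
      apply Filter.Tendsto.const_mul_atTop_of_neg hc0
      exact tendsto_natCast_atTop_atTop
    have h2 : Tendsto (fun d : ℕ => Real.exp (c * d)) atTop (nhds 0) :=
      Real.tendsto_exp_atBot.comp h1
    have h3 := ENNReal.tendsto_ofReal h2
    rwa [ENNReal.ofReal_zero] at h3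
  exact tendsto_of_tendsto_of_tendsto_of_le_of_le tendsto_const_nhds hexp
    (fun d => zero_le) bound


lemma arith_logbound {L δ x lm sR j : ℝ} (hs0 : 0 < sR) (hj1 : 1 ≤ j) (hδ0 : 0 < δ)
    (hδ : δ = x + L/sR) (l1 : sR * lm ≤ (2*sR - j) * L) :
    lm ≤ j*x - δ + 2*L := by
  have e5 : sR * δ = sR * x + L := by
    rw [hδ]
    field_simp
  have e6 : sR * δ ≤ j * (sR * δ) :=
    le_mul_of_one_le_left (by positivity) hj1
  have e7 : j * (sR * δ) = j * (sR * x) + j * L := by rw [e5]; ring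
  have key : sR * lm ≤ sR * (j*x - δ + 2*L) := by nlinarith [l1, e6, e7]
  exact le_of_mul_le_mul_left key hs0

lemma arith_final {mR A R pc K : ℝ} (hmR : 0 < mR) (hA0 : 0 < A)
    (hR0 : 0 ≤ R) (hpc0 : 0 ≤ pc) (hK0 : 0 ≤ K)
    (mc : (mR*A)^2 ≤ pc*(mR*(mR*A^2+R))) (hRK : R ≤ K*(mR*A^2)) : 1 - K ≤ pc := by
  have hB0 : 0 < mR*A^2 := by positivity
  have red : mR*A^2 ≤ pc*(mR*A^2+R) := by
    have h1 : mR*(mR*A^2) ≤ mR*(pc*(mR*A^2+R)) := by nlinarith [mc]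
    exact le_of_mul_le_mul_left h1 hmR
  have mid : (1-K)*(mR*A^2+R) ≤ mR*A^2 := by nlinarith [hRK, mul_nonneg hK0 hR0]
  exact le_of_mul_le_mul_right (le_trans mid red) (by linarith)

set_option maxHeartbeats 1000000 in
lemma one_side_bound {p : ℝ} (hp0 : 0 < p) (hp1 : p < 1) {s : ℕ} (hs : 1 ≤ s)
    {x δ : ℝ} (hδ : δ = x + Real.log (lamR p s)/(s:ℝ)) (hδ0 : 0 < δ)
    {d N : ℕ} (hN2 : 2*s ≤ N) (hNx : Real.exp (x*(d:ℝ)) ≤ (N:ℝ)) :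
    1 - (s:ℝ)*4^s*(s.factorial)*Real.exp (-(δ*d))
      ≤ (binomialModel (Fin N) d p {f | hasClique f s}).toReal := by
  classical
  have hlam0 : 0 < lamR p s := lamR_pos hp0 hp1 s
  have hlam1 : lamR p s ≤ 1 := lamR_le_one hp0 hp1 s
  set L : ℝ := Real.log (lamR p s) with hL
  have hL0 : L ≤ 0 := Real.log_nonpos hlam0.le hlam1
  have hsN : s ≤ N := by omega
  have hs0 : (0:ℝ) < (s:ℝ) := by exact_mod_cast Nat.pos_of_ne_zero (by omega)
  set 𝒯 : Finset (Finset (Fin N)) := Finset.univ.powersetCard s with h𝒯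
  have hcard : ∀ T ∈ 𝒯, T.card = s := by
    intro T hT
    rw [h𝒯, Finset.mem_powersetCard_univ] at hT
    exact hT
  have hm : 𝒯.card = N.choose s := by
    rw [h𝒯, Finset.card_powersetCard, Finset.card_univ, Fintype.card_fin]
  have hm0 : 0 < 𝒯.card := by rw [hm]; exact Nat.choose_pos hsN
  have hmR : (0:ℝ) < (𝒯.card:ℝ) := by exact_mod_cast hm0
  set A : ℝ := (lamR p s)^d with hA
  have hA0 : 0 < A := pow_pos hlam0 d
  have hAL : A = Real.exp ((d:ℝ) * L) := by
    rw [hA, hL, ← Real.exp_log hlam0, ← Real.exp_nat_mul, Real.exp_log hlam0]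
  have prE : ∀ T ∈ 𝒯, prR p (cliqueEvent (d := d) T) = A := by
    intro T hT
    rw [← prR_eq hp0.le hp1.le, cliqueEvent_measure hp0.le hp1.le, hcard T hT,
      ENNReal.toReal_ofReal (by positivity)]
  have hsum1 : ∑ T ∈ 𝒯, prR p (cliqueEvent (d := d) T) = (𝒯.card:ℝ) * A := by
    rw [Finset.sum_congr rfl prE, Finset.sum_const, nsmul_eq_mul]
  have hpairval : ∀ T ∈ 𝒯, ∀ T' ∈ 𝒯,
      prR p (cliqueEvent (d := d) T ∩ cliqueEvent (d := d) T')
        = muR p ((T ∩ T').card) (s - (T ∩ T').card) ^ d := by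
    intro T hT T' hT'
    have h1 : (T \ T').card = s - (T ∩ T').card := by
      have := Finset.card_sdiff_add_card_inter T T'
      rw [hcard T hT] at this
      omega
    have h2 : (T' \ T).card = s - (T ∩ T').card := by
      have := Finset.card_sdiff_add_card_inter T' T
      rw [Finset.inter_comm T' T, hcard T' hT'] at this
      omega
    rw [← prR_eq hp0.le hp1.le,
      cliqueEvent_inter_measure hp0.le hp1.le T T' _ h1 h2,
      ENNReal.toReal_ofReal (pow_nonneg (muR_pos hp0 hp1 _ _).le d)]
  set F : ℕ → ℝ := fun j => muR p j (s-j) ^ d with hF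
  have hF0 : ∀ j, 0 < F j := fun j => pow_pos (muR_pos hp0 hp1 _ _) d
  have hF0A : F 0 = A^2 := by
    show muR p 0 (s-0) ^ d = A^2
    rw [Nat.sub_zero, muR_zero_left, hA, ← pow_mul, ← pow_mul, Nat.mul_comm]
  set R : ℝ := ∑ i ∈ Finset.range s,
    ((s.choose (i+1) : ℝ) * ((N.choose (s-(i+1))):ℝ)) * F (i+1) with hR
  have hR0 : 0 ≤ R := by
    rw [hR]
    apply Finset.sum_nonneg
    intro i _
    exact mul_nonneg (mul_nonneg (by positivity) (by positivity)) (hF0 _).le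
  have inner : ∀ T ∈ 𝒯,
      ∑ T' ∈ 𝒯, prR p (cliqueEvent (d := d) T ∩ cliqueEvent (d := d) T')
        ≤ (𝒯.card:ℝ) * F 0 + R := by
    intro T hT
    have maps : ∀ T' ∈ 𝒯, (T ∩ T').card ∈ Finset.range (s+1) := by
      intro T' hT'
      rw [Finset.mem_range]
      have h1 : (T ∩ T').card ≤ T.card := Finset.card_le_card Finset.inter_subset_left
      rw [hcard T hT] at h1
      omega
    rw [← Finset.sum_fiberwise_of_maps_to maps
      (fun T' => prR p (cliqueEvent (d := d) T ∩ cliqueEvent (d := d) T'))]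
    have fib : ∀ j ∈ Finset.range (s+1),
        ∑ T' ∈ 𝒯.filter (fun T' => (T ∩ T').card = j),
          prR p (cliqueEvent (d := d) T ∩ cliqueEvent (d := d) T')
        = ((𝒯.filter (fun T' => (T ∩ T').card = j)).card : ℝ) * F j := by
      intro j _
      rw [Finset.sum_congr rfl (fun T' hT' => ?_), Finset.sum_const, nsmul_eq_mul]
      rw [Finset.mem_filter] at hT'
      rw [hpairval T hT T' hT'.1, hT'.2]
    rw [Finset.sum_congr rfl fib, Finset.sum_range_succ']
    have h0term : ((𝒯.filter (fun T' => (T ∩ T').card = 0)).card : ℝ) * F 0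
        ≤ (𝒯.card:ℝ) * F 0 := by
      apply mul_le_mul_of_nonneg_right _ (hF0 0).le
      exact_mod_cast Finset.card_filter_le _ _
    have hterm : ∀ i ∈ Finset.range s,
        ((𝒯.filter (fun T' => (T ∩ T').card = i+1)).card : ℝ) * F (i+1)
          ≤ ((s.choose (i+1) : ℝ) * ((N.choose (s-(i+1))):ℝ)) * F (i+1) := by
      intro i _
      apply mul_le_mul_of_nonneg_right _ (hF0 _).le
      have hcount := count_by_inter s (i+1) T (hcard T hT)
      rw [Fintype.card_fin] at hcount
      calc ((𝒯.filter (fun T' => (T ∩ T').card = i+1)).card : ℝ)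
          ≤ ((s.choose (i+1) * (N.choose (s-(i+1))) : ℕ) : ℝ) := by
            exact_mod_cast hcount
        _ = (s.choose (i+1) : ℝ) * ((N.choose (s-(i+1))):ℝ) := by push_cast; ring
    have hsum2 := Finset.sum_le_sum hterm
    rw [hR]
    linarith only [hsum2, h0term]
  have pairbound : ∑ T ∈ 𝒯, ∑ T' ∈ 𝒯,
      prR p (cliqueEvent (d := d) T ∩ cliqueEvent (d := d) T')
        ≤ (𝒯.card:ℝ) * ((𝒯.card:ℝ) * A^2 + R) := by
    calc ∑ T ∈ 𝒯, ∑ T' ∈ 𝒯,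
        prR p (cliqueEvent (d := d) T ∩ cliqueEvent (d := d) T')
        ≤ ∑ _T ∈ 𝒯, ((𝒯.card:ℝ) * F 0 + R) := Finset.sum_le_sum inner
      _ = (𝒯.card:ℝ) * ((𝒯.card:ℝ) * F 0 + R) := by
          rw [Finset.sum_const, nsmul_eq_mul]
      _ = (𝒯.card:ℝ) * ((𝒯.card:ℝ) * A^2 + R) := by rw [hF0A]
  have cs := second_moment hp0.le hp1.le 𝒯 (fun T => cliqueEvent (d := d) T)
  rw [hsum1] at cs
  have hUeq : (binomialModel (Fin N) d p {f | hasClique f s}).toReal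
      = prR p (⋃ T ∈ 𝒯, cliqueEvent (d := d) T) := by
    rw [← prR_eq hp0.le hp1.le]
    congr 1
    rw [hasClique_eq_union]
  set pc : ℝ := prR p (⋃ T ∈ 𝒯, cliqueEvent (d := d) T) with hpc
  have hpc0 : 0 ≤ pc := prR_nonneg hp0.le hp1.le _
  have mc : ((𝒯.card:ℝ) * A)^2 ≤ pc * ((𝒯.card:ℝ) * ((𝒯.card:ℝ) * A^2 + R)) := by
    calc ((𝒯.card:ℝ) * A)^2 ≤ pc * ∑ T ∈ 𝒯, ∑ T' ∈ 𝒯,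
          prR p (cliqueEvent (d := d) T ∩ cliqueEvent (d := d) T') := cs
      _ ≤ pc * ((𝒯.card:ℝ) * ((𝒯.card:ℝ) * A^2 + R)) :=
          mul_le_mul_of_nonneg_left pairbound hpc0
  set K : ℝ := (s:ℝ)*4^s*(s.factorial)*Real.exp (-(δ*d)) with hK
  have hK0 : 0 ≤ K := by
    rw [hK]
    positivity
  have hRK : R ≤ K * ((𝒯.card:ℝ) * A^2) := by
    have hNpos : (0:ℝ) < (N:ℝ) := by
      have h1 : (0:ℕ) < N := by omega
      exact_mod_cast h1
    have c3 : (N:ℝ)^s ≤ 2^s * (s.factorial:ℝ) * (𝒯.card:ℝ) := by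
      have d1 : ((N+1-s:ℕ):ℝ)^s ≤ (s.factorial:ℝ)*((N.choose s:ℕ):ℝ) := by
        have h := Nat.pow_sub_le_descFactorial N s
        rw [Nat.descFactorial_eq_factorial_mul_choose] at h
        exact_mod_cast h
      have hcast : ((N+1-s:ℕ):ℝ) = (N:ℝ)+1-(s:ℝ) := by
        have h2 : s ≤ N + 1 := by omega
        push_cast [Nat.cast_sub h2]
        ring
      have d2 : (N:ℝ)/2 ≤ ((N+1-s:ℕ):ℝ) := by
        rw [hcast]
        have h2s : (2*(s:ℝ)) ≤ (N:ℝ) := by exact_mod_cast hN2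
        linarith
      have d3 : ((N:ℝ)/2)^s ≤ ((N+1-s:ℕ):ℝ)^s :=
        pow_le_pow_left₀ (by positivity) d2 s
      have d5 := le_trans d3 d1
      rw [div_pow] at d5
      have h2p : (0:ℝ) < (2:ℝ)^s := by positivity
      rw [hm]
      calc (N:ℝ)^s = 2^s * ((N:ℝ)^s / 2^s) := by field_simp
        _ ≤ 2^s * ((s.factorial:ℝ)*((N.choose s:ℕ):ℝ)) :=
            mul_le_mul_of_nonneg_left d5 h2p.le
        _ = 2^s * (s.factorial:ℝ) * ((N.choose s:ℕ):ℝ) := by ring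
    have hterm2 : ∀ i ∈ Finset.range s,
        ((s.choose (i+1) : ℝ) * ((N.choose (s-(i+1))):ℝ)) * F (i+1)
          ≤ (4^s*(s.factorial:ℝ)*Real.exp (-(δ*d)))*((𝒯.card:ℝ) * A^2) := by
      intro i hi
      rw [Finset.mem_range] at hi
      have hj1 : 1 ≤ i+1 := by omega
      have hjs : i+1 ≤ s := by omega
      set j : ℕ := i + 1 with hj
      have c1 : (s.choose j : ℝ) ≤ 2^s := by
        exact_mod_cast choose_le_two_pow s j hjs
      have c2 : ((N.choose (s-j)):ℝ) ≤ (N:ℝ)^(s-j) := by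
        exact_mod_cast Nat.choose_le_pow N (s-j)
      have hmu0 : 0 < muR p j (s-j) := muR_pos hp0 hp1 _ _
      have c4 : F j ≤ Real.exp ((j:ℝ)*x*(d:ℝ) - δ*(d:ℝ)) * A^2 := by
        have l1 : (s:ℝ) * Real.log (muR p j (s-j)) ≤ ((2*s-j:ℕ):ℝ) * L := by
          have hple := muR_le_lamR hp0 hp1 s j hjs
          have hlog := Real.log_le_log (pow_pos hmu0 s) hple
          rwa [Real.log_pow, Real.log_pow] at hlog
        have hcast2 : ((2*s-j:ℕ):ℝ) = 2*(s:ℝ)-(j:ℝ) := by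
          have h2 : j ≤ 2*s := by omega
          push_cast [Nat.cast_sub h2]
          ring
        have l2 : Real.log (muR p j (s-j)) ≤ (j:ℝ)*x - δ + 2*L := by
          rw [hcast2] at l1
          have h1j : (1:ℝ) ≤ (j:ℝ) := by exact_mod_cast hj1
          exact arith_logbound hs0 h1j hδ0 hδ l1
        have l3 : F j = Real.exp ((d:ℝ) * Real.log (muR p j (s-j))) := by
          show muR p j (s-j) ^ d = _
          rw [← Real.exp_log hmu0, ← Real.exp_nat_mul, Real.exp_log hmu0]
        rw [l3, hAL, ← Real.exp_nat_mul, ← Real.exp_add]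
        apply Real.exp_le_exp.mpr
        have l4 : (d:ℝ) * Real.log (muR p j (s-j)) ≤ (d:ℝ) * ((j:ℝ)*x - δ + 2*L) :=
          mul_le_mul_of_nonneg_left l2 (Nat.cast_nonneg d)
        push_cast at l4 ⊢
        linarith only [l4]
      have c5 : Real.exp ((j:ℝ)*x*(d:ℝ)) ≤ (N:ℝ)^j := by
        have h1 : Real.exp (x*(d:ℝ))^j ≤ (N:ℝ)^j :=
          pow_le_pow_left₀ (Real.exp_pos _).le hNx j
        rw [← Real.exp_nat_mul] at h1
        rwa [show (j:ℝ)*x*(d:ℝ) = (j:ℝ)*(x*(d:ℝ)) by ring]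
      calc ((s.choose j : ℝ) * ((N.choose (s-j)):ℝ)) * F j
          ≤ ((2:ℝ)^s * (N:ℝ)^(s-j)) * F j := by
            apply mul_le_mul_of_nonneg_right _ (hF0 j).le
            apply mul_le_mul c1 c2 (by positivity) (by positivity)
        _ ≤ ((2:ℝ)^s * (N:ℝ)^(s-j)) * (Real.exp ((j:ℝ)*x*(d:ℝ) - δ*(d:ℝ)) * A^2) := by
            apply mul_le_mul_of_nonneg_left c4 (by positivity)
        _ = ((2:ℝ)^s * (N:ℝ)^(s-j)) * (Real.exp ((j:ℝ)*x*(d:ℝ)) * Real.exp (-(δ*(d:ℝ))) * A^2) := by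
            rw [sub_eq_add_neg, Real.exp_add]
        _ ≤ ((2:ℝ)^s * (N:ℝ)^(s-j)) * ((N:ℝ)^j * Real.exp (-(δ*(d:ℝ))) * A^2) := by
            apply mul_le_mul_of_nonneg_left _ (by positivity)
            apply mul_le_mul_of_nonneg_right _ (by positivity)
            apply mul_le_mul_of_nonneg_right c5 (by positivity)
        _ = (2:ℝ)^s * (N:ℝ)^s * Real.exp (-(δ*(d:ℝ))) * A^2 := by
            rw [show (N:ℝ)^s = (N:ℝ)^(s-j) * (N:ℝ)^j by
              rw [← pow_add]
              congr 1
              omega]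
            ring
        _ ≤ (2:ℝ)^s * (2^s * (s.factorial:ℝ) * (𝒯.card:ℝ)) * Real.exp (-(δ*(d:ℝ))) * A^2 := by
            apply mul_le_mul_of_nonneg_right _ (by positivity)
            apply mul_le_mul_of_nonneg_right _ (by positivity)
            exact mul_le_mul_of_nonneg_left c3 (by positivity)
        _ = (4^s*(s.factorial:ℝ)*Real.exp (-(δ*(d:ℝ))))*((𝒯.card:ℝ) * A^2) := by
            rw [show (4:ℝ)^s = 2^s * 2^s by rw [← mul_pow]; norm_num]
            ring
    rw [hR]
    calc ∑ i ∈ Finset.range s,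
        ((s.choose (i+1) : ℝ) * ((N.choose (s-(i+1))):ℝ)) * F (i+1)
        ≤ ∑ _i ∈ Finset.range s,
            (4^s*(s.factorial:ℝ)*Real.exp (-(δ*d)))*((𝒯.card:ℝ) * A^2) :=
          Finset.sum_le_sum hterm2
      _ = (s:ℝ) * ((4^s*(s.factorial:ℝ)*Real.exp (-(δ*d)))*((𝒯.card:ℝ) * A^2)) := by
          rw [Finset.sum_const, Finset.card_range, nsmul_eq_mul]
      _ = K * ((𝒯.card:ℝ) * A^2) := by
          rw [hK]
          ring
  rw [hUeq]
  exact arith_final hmR hA0 hR0 hpc0 hK0 mc hRK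
lemma binomialModel_isProb {p : ℝ} (h0 : 0 ≤ p) (h1 : p ≤ 1) :
    IsProbabilityMeasure (binomialModel V d p) := by
  haveI := coordMeasure_isProb h0 h1
  haveI : IsProbabilityMeasure (cubeMeasure d p) := by
    unfold cubeMeasure
    infer_instance
  unfold binomialModel
  infer_instance

lemma one_side {p : ℝ} (hp0 : 0 < p) (hp1 : p < 1) {s : ℕ} (hs : 1 ≤ s)
    (n : ℕ → ℕ) (x : ℝ) (hx : -(1/(s:ℝ)) * Real.log (lamR p s) < x)
    (hn : ∀ d : ℕ, Real.exp (x * d) ≤ (n d : ℝ)) :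
    Tendsto (fun d => binomialModel (Fin (n d)) d p {f | hasClique f s})
      atTop (nhds 1) := by
  have hlam0 : 0 < lamR p s := lamR_pos hp0 hp1 s
  have hlam1 : lamR p s ≤ 1 := lamR_le_one hp0 hp1 s
  set L : ℝ := Real.log (lamR p s) with hL
  have hL0 : L ≤ 0 := Real.log_nonpos hlam0.le hlam1
  have hs0 : (0:ℝ) < (s:ℝ) := by exact_mod_cast Nat.pos_of_ne_zero (by omega)
  set δ : ℝ := x + L/(s:ℝ) with hδ
  have hδ0 : 0 < δ := by
    rw [hδ]
    have h1 : -(1/(s:ℝ)) * L = -(L/(s:ℝ)) := by field_simp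
    rw [h1] at hx
    linarith
  have hx0 : 0 < x := by
    have h2 : 0 ≤ (1/(s:ℝ)) * (-L) :=
      mul_nonneg (by positivity) (neg_nonneg.mpr hL0)
    have h3 : -(1/(s:ℝ)) * L = (1/(s:ℝ)) * (-L) := by ring
    rw [h3] at hx
    linarith
  set K : ℝ := (s:ℝ)*4^s*(s.factorial) with hK
  -- real probability sequence
  set pcR : ℕ → ℝ := fun d =>
    (binomialModel (Fin (n d)) d p {f | hasClique f s}).toReal with hpcR
  have hev : ∀ᶠ d : ℕ in atTop, 2*s ≤ n d := by
    have hexp : Tendsto (fun d : ℕ => Real.exp (x * (d:ℝ))) atTop atTop :=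
      Real.tendsto_exp_atTop.comp
        (Filter.Tendsto.const_mul_atTop hx0 tendsto_natCast_atTop_atTop)
    filter_upwards [hexp.eventually_ge_atTop ((2*s:ℕ):ℝ)] with d hd
    have := le_trans hd (hn d)
    exact_mod_cast this
  have hlow : ∀ᶠ d : ℕ in atTop, 1 - K * Real.exp (-(δ*(d:ℝ))) ≤ pcR d := by
    filter_upwards [hev] with d hd
    have := one_side_bound hp0 hp1 hs (hδ.symm ▸ rfl : δ = x + L/(s:ℝ)) hδ0 hd (hn d)
    rw [hK]
    convert this using 2
  have hup : ∀ d : ℕ, pcR d ≤ 1 := by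
    intro d
    haveI := binomialModel_isProb (V := Fin (n d)) (d := d) hp0.le hp1.le
    rw [hpcR]
    have h1 : binomialModel (Fin (n d)) d p {f | hasClique f s} ≤ 1 := prob_le_one
    have h2 := ENNReal.toReal_mono ENNReal.one_ne_top h1
    simpa using h2
  have hg : Tendsto (fun d : ℕ => 1 - K * Real.exp (-(δ*(d:ℝ)))) atTop (nhds 1) := by
    have h1 : Tendsto (fun d : ℕ => -(δ*(d:ℝ))) atTop atBot := by
      have := Filter.Tendsto.const_mul_atTop hδ0 (tendsto_natCast_atTop_atTop
        (R := ℝ))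
      exact Filter.tendsto_neg_atBot_iff.mpr this
    have h2 : Tendsto (fun d : ℕ => K * Real.exp (-(δ*(d:ℝ)))) atTop (nhds 0) := by
      have h3 := (Real.tendsto_exp_atBot.comp h1).const_mul K
      simpa using h3
    have h4 := h2.const_sub 1
    simpa using h4
  have hreal : Tendsto pcR atTop (nhds 1) :=
    tendsto_of_tendsto_of_tendsto_of_le_of_le' hg tendsto_const_nhds hlow
      (Filter.Eventually.of_forall hup)
  have hofreal := ENNReal.tendsto_ofReal hreal
  rw [ENNReal.ofReal_one] at hofreal
  apply hofreal.congr
  intro d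
  haveI := binomialModel_isProb (V := Fin (n d)) (d := d) hp0.le hp1.le
  rw [hpcR]
  exact ENNReal.ofReal_toReal (measure_ne_top _ _)

end CTP

/-- **Corollary (threshold for `s`-cliques in the binomial model).**
For fixed `p ∈ (0,1)` and `s ≥ 1`,
`t_{K_s}(p) = log (2/(1+p)) - (1/s) log (2 - (2p/(1+p))^s)` is a threshold for the
appearance of `s`-cliques in `G_{V,d,p}`. -/
theorem binomial_clique_threshold (p : ℝ) (hp : p ∈ Set.Ioo (0 : ℝ) 1)
    (s : ℕ) (hs : 1 ≤ s) (n : ℕ → ℕ) :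
    (∀ x : ℝ,
      x < Real.log (2 / (1 + p)) - (1 / s) * Real.log (2 - (2 * p / (1 + p)) ^ s) →
      (∀ d : ℕ, (n d : ℝ) ≤ Real.exp (x * d)) →
      Tendsto (fun d => binomialModel (Fin (n d)) d p {f | hasClique f s})
        atTop (nhds 0)) ∧
    (∀ x : ℝ,
      Real.log (2 / (1 + p)) - (1 / s) * Real.log (2 - (2 * p / (1 + p)) ^ s) < x →
      (∀ d : ℕ, Real.exp (x * d) ≤ (n d : ℝ)) →
      Tendsto (fun d => binomialModel (Fin (n d)) d p {f | hasClique f s})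
        atTop (nhds 1)) := by
  obtain ⟨hp0, hp1⟩ := hp
  have hthr := CTP.threshold_eq hp0 hp1 hs
  constructor
  · intro x hx hn
    apply CTP.zero_side hp0 hp1 hs n x _ hn
    rwa [hthr] at hx
  · intro x hx hn
    apply CTP.one_side hp0 hp1 hs n x _ hn
    rwa [hthr] at hx
end

section
/- Let p ∈ (0,1) be fixed. Then log(2/(1+p)) is a threshold for covering the ambient hypercube Q_d with the feature subcubes from the binomial model: for every sequence of vertex sets V(d), the probability that ⋃_{v∈V(d)} f(v) = Q_d tends to 0 as d → ∞ whenever |V(d)| ≤ e^{x d} for some fixed x < log(2/(1+p)), and tends to 1 as d → ∞ whenever |V(d)| ≥ e^{x d} for some fixed x > log(2/(1+p)). -/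
open MeasureTheory Filter

open scoped ENNReal

instance inst_s6 : MeasurableSingletonClass (Option Bool) := ⟨fun _ => trivial⟩

lemma coordMeasure_univ (p : ℝ) (h0 : 0 ≤ p) (h1 : p ≤ 1) :
    coordMeasure p Set.univ = 1 := by
  have h2 : (0:ℝ) ≤ (1 - p) / 2 := by linarith
  simp only [coordMeasure, Measure.add_apply, Measure.smul_apply, smul_eq_mul,
    Measure.dirac_apply, Set.indicator_of_mem (Set.mem_univ _),
    Pi.one_apply, mul_one]
  rw [← ENNReal.ofReal_add h0 h2, ← ENNReal.ofReal_add (by linarith) h2]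
  rw [show p + (1 - p) / 2 + (1 - p) / 2 = 1 by ring, ENNReal.ofReal_one]

lemma coordMeasure_isProb (p : ℝ) (h0 : 0 ≤ p) (h1 : p ≤ 1) :
    IsProbabilityMeasure (coordMeasure p) := ⟨coordMeasure_univ p h0 h1⟩

lemma coordMeasure_mem (p : ℝ) (h0 : 0 ≤ p) (h1 : p ≤ 1) (b : Bool) :
    coordMeasure p {none, some b} = ENNReal.ofReal ((1 + p) / 2) := by
  have h2 : (0:ℝ) ≤ (1 - p) / 2 := by linarith
  have : ENNReal.ofReal ((1 + p)/2) = ENNReal.ofReal p + ENNReal.ofReal ((1-p)/2) := by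
    rw [← ENNReal.ofReal_add h0 h2]; congr 1; ring
  cases b <;>
  · simp only [coordMeasure, Measure.add_apply, Measure.smul_apply, smul_eq_mul,
      Measure.dirac_apply]
    simp [Set.indicator_apply, this]
    try ring

lemma memSubcube_set_eq {d : ℕ} (x : Fin d → Bool) :
    {c : Subcube d | memSubcube x c} = Set.pi Set.univ (fun i => {none, some (x i)}) := by
  ext c
  simp only [Set.mem_setOf_eq, Set.mem_pi, Set.mem_univ, true_implies, Set.mem_insert_iff,
    Set.mem_singleton_iff]
  constructor
  · intro h i
    cases hc : c i with
    | none => exact Or.inl rfl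
    | some b => exact Or.inr (by rw [h i b hc])
  · intro h i b hb
    rcases h i with h' | h'
    · rw [hb] at h'; cases h'
    · rw [hb] at h'; injection h' with h''; rw [h'']

lemma cubeMeasure_mem {d : ℕ} (p : ℝ) (h0 : 0 ≤ p) (h1 : p ≤ 1) (x : Fin d → Bool) :
    cubeMeasure d p {c | memSubcube x c} = ENNReal.ofReal ((1 + p) / 2) ^ d := by
  haveI := coordMeasure_isProb p h0 h1
  rw [memSubcube_set_eq, cubeMeasure, Measure.pi_pi]
  simp [coordMeasure_mem p h0 h1]

lemma cubeMeasure_isProb {d : ℕ} (p : ℝ) (h0 : 0 ≤ p) (h1 : p ≤ 1) :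
    IsProbabilityMeasure (cubeMeasure d p) := by
  haveI := coordMeasure_isProb p h0 h1
  exact inferInstanceAs (IsProbabilityMeasure (Measure.pi _))

lemma binom_cyl {n d : ℕ} (p : ℝ) (h0 : 0 ≤ p) (h1 : p ≤ 1) (v : Fin n)
    (A : Set (Subcube d)) :
    binomialModel (Fin n) d p {f | f v ∈ A} = cubeMeasure d p A := by
  haveI := cubeMeasure_isProb (d := d) p h0 h1
  have hset : {f : Fin n → Subcube d | f v ∈ A}
      = Set.pi Set.univ (fun w => if w = v then A else Set.univ) := by
    ext f
    simp only [Set.mem_setOf_eq, Set.mem_pi, Set.mem_univ, true_implies]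
    constructor
    · intro h w
      by_cases hw : w = v <;> simp [hw, h]
    · intro h
      have := h v
      simpa using this
  rw [hset, binomialModel, Measure.pi_pi]
  rw [Finset.prod_eq_single v (fun w _ hw => by simp [hw, measure_univ]) (by simp)]
  simp

lemma cover_le (n d : ℕ) (p : ℝ) (h0 : 0 ≤ p) (h1 : p ≤ 1) :
    binomialModel (Fin n) d p {f | coversCube f}
      ≤ n * ENNReal.ofReal ((1 + p) / 2) ^ d := by
  have hsub : {f : Fin n → Subcube d | coversCube f}
      ⊆ ⋃ v : Fin n, {f | memSubcube (fun _ => false) (f v)} := by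
    intro f hf
    obtain ⟨v, hv⟩ := hf (fun _ => false)
    exact Set.mem_iUnion.2 ⟨v, hv⟩
  calc binomialModel (Fin n) d p {f | coversCube f}
      ≤ binomialModel (Fin n) d p (⋃ v : Fin n, {f | memSubcube (fun _ => false) (f v)}) :=
        measure_mono hsub
    _ ≤ ∑' v : Fin n, binomialModel (Fin n) d p {f | memSubcube (fun _ => false) (f v)} :=
        measure_iUnion_le _
    _ = n * ENNReal.ofReal ((1 + p) / 2) ^ d := by
        have : ∀ v : Fin n, binomialModel (Fin n) d p {f | memSubcube (fun _ => false) (f v)}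
            = ENNReal.ofReal ((1 + p) / 2) ^ d := fun v => by
          rw [show {f : Fin n → Subcube d | memSubcube (fun _ => false) (f v)}
              = {f | f v ∈ {c | memSubcube (fun _ => false) c}} from rfl,
            binom_cyl p h0 h1, cubeMeasure_mem p h0 h1]
        simp [this, tsum_fintype, Finset.sum_const, nsmul_eq_mul]

lemma binom_notcover_point {n d : ℕ} (p : ℝ) (h0 : 0 ≤ p) (h1 : p ≤ 1) (x : Fin d → Bool) :
    binomialModel (Fin n) d p {f | ∀ v, ¬ memSubcube x (f v)}
      = (1 - ENNReal.ofReal ((1 + p) / 2) ^ d) ^ n := by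
  haveI := cubeMeasure_isProb (d := d) p h0 h1
  have hset : {f : Fin n → Subcube d | ∀ v, ¬ memSubcube x (f v)}
      = Set.pi Set.univ (fun _ => {c | memSubcube x c}ᶜ) := by
    ext f; simp [Set.mem_pi]
  have hmeas : MeasurableSet {c : Subcube d | memSubcube x c} :=
    Set.Finite.measurableSet (Set.toFinite _)
  rw [hset, binomialModel, Measure.pi_pi]
  simp [prob_compl_eq_one_sub hmeas, cubeMeasure_mem p h0 h1 x]

lemma notcover_le (n d : ℕ) (p : ℝ) (h0 : 0 ≤ p) (h1 : p ≤ 1) :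
    binomialModel (Fin n) d p {f | ¬ coversCube f}
      ≤ 2 ^ d * (1 - ENNReal.ofReal ((1 + p) / 2) ^ d) ^ n := by
  have hsub : {f : Fin n → Subcube d | ¬ coversCube f}
      ⊆ ⋃ x : Fin d → Bool, {f | ∀ v, ¬ memSubcube x (f v)} := by
    intro f hf
    rw [Set.mem_setOf_eq, coversCube] at hf
    push_neg at hf
    obtain ⟨x, hx⟩ := hf
    exact Set.mem_iUnion.2 ⟨x, hx⟩
  calc binomialModel (Fin n) d p {f | ¬ coversCube f}
      ≤ binomialModel (Fin n) d p (⋃ x : Fin d → Bool, {f | ∀ v, ¬ memSubcube x (f v)}) :=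
        measure_mono hsub
    _ ≤ ∑' x : Fin d → Bool, binomialModel (Fin n) d p {f | ∀ v, ¬ memSubcube x (f v)} :=
        measure_iUnion_le _
    _ = 2 ^ d * (1 - ENNReal.ofReal ((1 + p) / 2) ^ d) ^ n := by
        simp [binom_notcover_point p h0 h1, tsum_fintype, Finset.sum_const, nsmul_eq_mul,
          Fintype.card_fun]

lemma exp_sub_linear (C : ℝ) : Tendsto (fun y : ℝ => Real.exp y - C * y) atTop atTop := by
  have h := Real.tendsto_exp_div_pow_atTop 1
  have hev : ∀ᶠ y in atTop, y ≤ Real.exp y - C * y := by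
    filter_upwards [h.eventually_ge_atTop (C + 1), eventually_gt_atTop 0] with y hy hy0
    rw [pow_one, le_div_iff₀ hy0] at hy
    nlinarith
  exact tendsto_atTop_mono' _ hev tendsto_id

lemma drift (ε : ℝ) (hε : 0 < ε) :
    Tendsto (fun d : ℕ => (d : ℝ) * Real.log 2 - Real.exp (ε * d)) atTop atBot := by
  have hlin : Tendsto (fun y : ℝ => ε * y) atTop atTop :=
    tendsto_id.const_mul_atTop hε
  have hcomp := (exp_sub_linear (Real.log 2 / ε)).comp hlin
  have hdrift : Tendsto (fun y : ℝ => Real.exp (ε * y) - Real.log 2 * y) atTop atTop := by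
    refine hcomp.congr fun y => ?_
    simp only [Function.comp_apply]
    congr 1
    field_simp
  have h2 := tendsto_neg_atTop_atBot.comp (hdrift.comp tendsto_natCast_atTop_atTop)
  refine h2.congr fun d => ?_
  simp only [Function.comp_apply]
  ring



/-- **Corollary (covering threshold for the binomial model).** For fixed
`p ∈ (0,1)`, `log (2/(1+p))` is a threshold for covering `Q_d` with the feature
subcubes of `G_{V,d,p}`. -/
theorem binomial_covering_threshold (p : ℝ) (hp : p ∈ Set.Ioo (0 : ℝ) 1)
    (n : ℕ → ℕ) :
    (∀ x : ℝ, x < Real.log (2 / (1 + p)) →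
      (∀ d : ℕ, (n d : ℝ) ≤ Real.exp (x * d)) →
      Tendsto (fun d => binomialModel (Fin (n d)) d p {f | coversCube f})
        atTop (nhds 0)) ∧
    (∀ x : ℝ, Real.log (2 / (1 + p)) < x →
      (∀ d : ℕ, Real.exp (x * d) ≤ (n d : ℝ)) →
      Tendsto (fun d => binomialModel (Fin (n d)) d p {f | coversCube f})
        atTop (nhds 1)) := by
  obtain ⟨hp0, hp1⟩ := hp
  have h0 : (0:ℝ) ≤ p := hp0.le
  have h1 : p ≤ 1 := hp1.le
  have hq0 : (0:ℝ) < (1 + p) / 2 := by linarith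
  have hq1 : (1 + p) / 2 < 1 := by linarith
  have hlog : Real.log (2 / (1 + p)) = -Real.log ((1 + p) / 2) := by
    rw [show (2:ℝ) / (1 + p) = ((1 + p) / 2)⁻¹ by rw [inv_div], Real.log_inv]
  constructor
  · intro x hx hn
    have hr0 : (0:ℝ) ≤ Real.exp x * ((1 + p) / 2) :=
      mul_nonneg (Real.exp_nonneg x) hq0.le
    have hr1 : Real.exp x * ((1 + p) / 2) < 1 := by
      have hxl : Real.exp x < ((1 + p) / 2)⁻¹ := by
        rw [← Real.exp_log (inv_pos.2 hq0), Real.log_inv]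
        exact Real.exp_lt_exp.2 (by rw [hlog] at hx; linarith)
      calc Real.exp x * ((1 + p) / 2) < ((1 + p) / 2)⁻¹ * ((1 + p) / 2) :=
            mul_lt_mul_of_pos_right hxl hq0
        _ = 1 := inv_mul_cancel₀ hq0.ne'
    have hb : ∀ d, binomialModel (Fin (n d)) d p {f | coversCube f}
        ≤ ENNReal.ofReal ((Real.exp x * ((1 + p) / 2)) ^ d) := by
      intro d
      refine le_trans (cover_le (n d) d p h0 h1) ?_
      have e1 : ((n d : ℕ) : ℝ≥0∞) * ENNReal.ofReal ((1 + p) / 2) ^ d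
          = ENNReal.ofReal ((n d : ℝ) * ((1 + p) / 2) ^ d) := by
        rw [ENNReal.ofReal_mul (Nat.cast_nonneg _), ENNReal.ofReal_natCast,
          ENNReal.ofReal_pow hq0.le]
      rw [e1]
      apply ENNReal.ofReal_le_ofReal
      calc (n d : ℝ) * ((1 + p) / 2) ^ d
          ≤ Real.exp (x * d) * ((1 + p) / 2) ^ d :=
            mul_le_mul_of_nonneg_right (hn d) (pow_nonneg hq0.le d)
        _ = (Real.exp x * ((1 + p) / 2)) ^ d := by
            rw [mul_comm x (d:ℝ), Real.exp_nat_mul, ← mul_pow]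
    have hlim : Tendsto (fun d : ℕ => ENNReal.ofReal ((Real.exp x * ((1 + p) / 2)) ^ d))
        atTop (nhds 0) := by
      have h := tendsto_pow_atTop_nhds_zero_of_lt_one hr0 hr1
      have h2 := (ENNReal.continuous_ofReal.tendsto 0).comp h
      simpa [Function.comp_def] using h2
    exact tendsto_of_tendsto_of_tendsto_of_le_of_le tendsto_const_nhds hlim
      (fun d => zero_le) hb
  · intro x hx hn
    have hε : 0 < x + Real.log ((1 + p) / 2) := by rw [hlog] at hx; linarith
    have key : ∀ d, binomialModel (Fin (n d)) d p {f | ¬ coversCube f}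
        ≤ ENNReal.ofReal (2 ^ d *
            Real.exp (-(Real.exp ((x + Real.log ((1 + p) / 2)) * d)))) := by
      intro d
      refine le_trans (notcover_le (n d) d p h0 h1) ?_
      have hqd0 : (0:ℝ) ≤ ((1 + p) / 2) ^ d := pow_nonneg hq0.le d
      have hqd1 : ((1 + p) / 2) ^ d ≤ 1 := pow_le_one₀ hq0.le hq1.le
      have e1 : (1 : ℝ≥0∞) - ENNReal.ofReal ((1 + p) / 2) ^ d
          = ENNReal.ofReal (1 - ((1 + p) / 2) ^ d) := by
        rw [← ENNReal.ofReal_pow hq0.le, ENNReal.ofReal_sub 1 hqd0, ENNReal.ofReal_one]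
      have e2 : (2:ℝ≥0∞) ^ d = ENNReal.ofReal ((2:ℝ) ^ d) := by
        rw [ENNReal.ofReal_pow (by norm_num : (0:ℝ) ≤ 2)]
        norm_num
      rw [e1, e2, ← ENNReal.ofReal_pow (by linarith), ← ENNReal.ofReal_mul (by positivity)]
      apply ENNReal.ofReal_le_ofReal
      apply mul_le_mul_of_nonneg_left _ (by positivity)
      have hle1 : (1 - ((1 + p) / 2) ^ d) ^ (n d)
          ≤ Real.exp (-(((1 + p) / 2) ^ d)) ^ (n d) :=
        pow_le_pow_left₀ (by linarith)
          (by linarith [Real.add_one_le_exp (-(((1 + p) / 2) ^ d))]) _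
      have e3 : Real.exp (-(((1 + p) / 2) ^ d)) ^ (n d)
          = Real.exp (-((n d : ℝ) * ((1 + p) / 2) ^ d)) := by
        rw [← Real.exp_nat_mul]; ring_nf
      have hnq : Real.exp ((x + Real.log ((1 + p) / 2)) * d)
          ≤ (n d : ℝ) * ((1 + p) / 2) ^ d := by
        have hqd : ((1 + p) / 2) ^ d = Real.exp ((Real.log ((1 + p) / 2)) * d) := by
          rw [mul_comm, Real.exp_nat_mul, Real.exp_log hq0]
        calc Real.exp ((x + Real.log ((1 + p) / 2)) * d)
            = Real.exp (x * d) * Real.exp ((Real.log ((1 + p) / 2)) * d) := by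
              rw [← Real.exp_add]; ring_nf
          _ ≤ (n d : ℝ) * ((1 + p) / 2) ^ d := by
              rw [← hqd]
              exact mul_le_mul_of_nonneg_right (hn d) (by positivity)
      calc (1 - ((1 + p) / 2) ^ d) ^ (n d)
          ≤ Real.exp (-((n d : ℝ) * ((1 + p) / 2) ^ d)) := e3 ▸ hle1
        _ ≤ Real.exp (-(Real.exp ((x + Real.log ((1 + p) / 2)) * d))) :=
            Real.exp_le_exp.2 (by linarith)
    have hB : Tendsto (fun d : ℕ => ENNReal.ofReal (2 ^ d *
        Real.exp (-(Real.exp ((x + Real.log ((1 + p) / 2)) * d))))) atTop (nhds 0) := by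
      have heq : ∀ d : ℕ, (2:ℝ) ^ d *
          Real.exp (-(Real.exp ((x + Real.log ((1 + p) / 2)) * d)))
          = Real.exp ((d:ℝ) * Real.log 2
              - Real.exp ((x + Real.log ((1 + p) / 2)) * d)) := by
        intro d
        rw [sub_eq_add_neg, Real.exp_add, Real.exp_nat_mul,
          Real.exp_log (by norm_num : (0:ℝ) < 2)]
      have hreal : Tendsto (fun d : ℕ => (2:ℝ) ^ d *
          Real.exp (-(Real.exp ((x + Real.log ((1 + p) / 2)) * d)))) atTop (nhds 0) := by
        have h := Real.tendsto_exp_atBot.comp (drift _ hε)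
        refine h.congr fun d => ?_
        simp only [Function.comp_apply]
        exact (heq d).symm
      have h2 := (ENNReal.continuous_ofReal.tendsto 0).comp hreal
      simpa [Function.comp_def] using h2
    have hnot : Tendsto (fun d => binomialModel (Fin (n d)) d p {f | ¬ coversCube f})
        atTop (nhds 0) :=
      tendsto_of_tendsto_of_tendsto_of_le_of_le tendsto_const_nhds hB
        (fun d => zero_le) key
    have hcompl : ∀ d, binomialModel (Fin (n d)) d p {f | coversCube f}
        = 1 - binomialModel (Fin (n d)) d p {f | ¬ coversCube f} := by
      intro d
      haveI := cubeMeasure_isProb (d := d) p h0 h1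
      haveI : IsProbabilityMeasure (binomialModel (Fin (n d)) d p) :=
        inferInstanceAs (IsProbabilityMeasure (Measure.pi _))
      have hmeas : MeasurableSet {f : Fin (n d) → Subcube d | ¬ coversCube f} :=
        Set.Finite.measurableSet (Set.toFinite _)
      have h := prob_compl_eq_one_sub (μ := binomialModel (Fin (n d)) d p) hmeas
      rw [← h]
      congr 1
      ext f
      simp [Set.mem_compl_iff]
    have hcont : Tendsto (fun d => (1:ℝ≥0∞)
        - binomialModel (Fin (n d)) d p {f | ¬ coversCube f}) atTop (nhds 1) := by
      have h := ((ENNReal.continuous_sub_left ENNReal.one_ne_top).tendsto 0).comp hnot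
      simpa [Function.comp_def] using h
    exact hcont.congr fun d => (hcompl d).symm
end

section
/- For all real y ∈ [0,1] and all integers i, s with 0 ≤ i ≤ s, the inequality (2 + 2y^i − 4y^s + y^{2s−i})^s ≤ (2 − y^s)^{2s−i} holds. -/
private def Gfun (y : ℝ) (s j : ℕ) : ℝ := 2 + 2 * y ^ j - 4 * y ^ s + y ^ (2 * s - j)

private lemma key_bracket (y A B b : ℝ) (hy0 : 0 < y) (hy1 : y ≤ 1)
    (hA0 : 0 ≤ A) (hA1 : A ≤ 1) (hB0 : 0 ≤ B) (hB1 : B ≤ 1)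
    (hb0 : 0 ≤ b) (hby : b ≤ y) :
    0 ≤ (2 - 4*b)*y*(2*A+B) + 2*b^2*(1+y)^2 := by
  rcases le_or_gt (4*b) 2 with h | h
  · have h1 : 0 ≤ (2 - 4*b)*y*(2*A+B) :=
      mul_nonneg (mul_nonneg (by linarith) hy0.le) (by linarith)
    nlinarith [sq_nonneg (1+y), sq_nonneg b]
  · have hb1 : b ≤ 1 := le_trans hby hy1
    have h3 : y*(2*A+B) ≤ 3 := by nlinarith
    have h4 : 3*(2-4*b) ≤ (2 - 4*b)*y*(2*A+B) := by nlinarith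
    have h5 : (1+b)^2 ≤ (1+y)^2 := by nlinarith
    have h6 : 2*b^2*(1+b)^2 ≤ 2*b^2*(1+y)^2 := by nlinarith [sq_nonneg b]
    nlinarith [sq_nonneg (b^2+b-1), sq_nonneg (b-1)]

private lemma key_poly (y A B b : ℝ) (hy0 : 0 < y) (hy1 : y ≤ 1)
    (hA0 : 0 ≤ A) (hA1 : A ≤ 1) (hB0 : 0 ≤ B) (hB1 : B ≤ 1)
    (hb0 : 0 ≤ b) (hby : b ≤ y) (hAB : A * B = b ^ 2) :
    (2 + 2*A - 4*b + B)^2 * y^2 ≤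
      (2*y + 2*A - 4*b*y + B*y^2) * (2*y + 2*A*y^2 - 4*b*y + B) := by
  have hbr := key_bracket y A B b hy0 hy1 hA0 hA1 hB0 hB1 hb0 hby
  nlinarith [mul_nonneg (sq_nonneg (1-y)) hbr, sq_nonneg (y^2-1)]

private lemma key_poly' (y p q b : ℝ) (hy0 : 0 < y) (hy1 : y ≤ 1)
    (hp0 : 0 ≤ p) (hq0 : 0 ≤ q)
    (hA1 : p*y ≤ 1) (hB1 : q*y ≤ 1)
    (hb0 : 0 ≤ b) (hby : b ≤ y) (hAB : p * q * y^2 = b ^ 2) :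
    (2 + 2*(p*y) - 4*b + q*y)^2 ≤ (2 + 2*p - 4*b + q*y^2) * (2 + 2*(p*y^2) - 4*b + q) := by
  have key := key_poly y (p*y) (q*y) b hy0 hy1 (mul_nonneg hp0 hy0.le) hA1
    (mul_nonneg hq0 hy0.le) hB1 hb0 hby (by nlinarith)
  have hy2 : (0:ℝ) < y^2 := by positivity
  apply le_of_mul_le_mul_right _ hy2
  nlinarith [key]

private lemma Gfun_pos (y : ℝ) (hy0 : 0 ≤ y) (hy1 : y ≤ 1) (s j : ℕ) (hj : j ≤ s) :
    0 < Gfun y s j := by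
  have h1 : y^s ≤ y^j := pow_le_pow_of_le_one hy0 hy1 hj
  have h2 : y^(2*s) ≤ y^(2*s-j) := pow_le_pow_of_le_one hy0 hy1 (Nat.sub_le _ _)
  have h3 : y^(2*s) = (y^s)^2 := pow_mul' y 2 s
  have h4 : y^s ≤ 1 := pow_le_one₀ hy0 hy1
  have h5 : 0 ≤ y^s := pow_nonneg hy0 s
  unfold Gfun
  nlinarith [sq_nonneg (1 - y^s)]

private lemma Gfun_logconv (y : ℝ) (hy0 : 0 < y) (hy1 : y ≤ 1) (s k : ℕ) (hk : k + 2 ≤ s) :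
    Gfun y s (k+1) ^ 2 ≤ Gfun y s k * Gfun y s (k+2) := by
  have e1 : y^(k+1) = y^k * y := pow_succ y k
  have e2 : y^(k+2) = y^k * y^2 := pow_add y k 2
  have e3 : y^(2*s-k) = y^(2*s-(k+2)) * y^2 := by rw [← pow_add]; congr 1; omega
  have e4 : y^(2*s-(k+1)) = y^(2*s-(k+2)) * y := by rw [← pow_succ]; congr 1; omega
  have eAB : y^k * y^(2*s-(k+2)) * y^2 = (y^s) ^ 2 := by
    rw [← pow_mul', ← pow_add, ← pow_add]; congr 1; omega
  have hby : y^s ≤ y := by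
    have h := pow_le_pow_of_le_one hy0.le hy1 (show 1 ≤ s by omega)
    rwa [pow_one] at h
  have key := key_poly' y (y^k) (y^(2*s-(k+2))) (y^s) hy0 hy1
    (pow_nonneg hy0.le _) (pow_nonneg hy0.le _)
    (by rw [← pow_succ]; exact pow_le_one₀ hy0.le hy1)
    (by rw [← pow_succ]; exact pow_le_one₀ hy0.le hy1)
    (pow_nonneg hy0.le _) hby eAB
  unfold Gfun
  rw [e1, e2, e3, e4]
  nlinarith [key]

private lemma Gfun_main (y : ℝ) (hy0 : 0 < y) (hy1 : y ≤ 1) (s i : ℕ)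
    (hi : 1 ≤ i) (his : i ≤ s) :
    Gfun y s i ^ s ≤ Gfun y s 0 ^ (s - i) * Gfun y s s ^ i := by
  have hGpos : ∀ j, j ≤ s → 0 < Gfun y s j := fun j hj => Gfun_pos y hy0.le hy1 s j hj
  set L : ℕ → ℝ := fun j => Real.log (Gfun y s j) with hL
  have hconv : ∀ k, k + 2 ≤ s → L (k+1) - L k ≤ L (k+2) - L (k+1) := by
    intro k hk
    have h := Gfun_logconv y hy0 hy1 s k hk
    have h1 := hGpos k (by omega)
    have h2 := hGpos (k+1) (by omega)
    have h3 := hGpos (k+2) (by omega)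
    have hl : Real.log (Gfun y s (k+1) ^ 2) ≤ Real.log (Gfun y s k * Gfun y s (k+2)) :=
      Real.log_le_log (by positivity) h
    rw [Real.log_pow, Real.log_mul h1.ne' h3.ne'] at hl
    simp only [hL]
    push_cast at hl
    linarith
  have hmono : ∀ j k, j ≤ k → k + 1 ≤ s → L (j+1) - L j ≤ L (k+1) - L k := by
    intro j k
    induction k with
    | zero => intro hjk _; interval_cases j; exact le_refl _
    | succ k ih =>
      intro hjk hk
      rcases eq_or_lt_of_le hjk with h | h
      · subst h; exact le_rfl
      · exact le_trans (ih (by omega) (by omega)) (hconv k hk)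
  set c := L ((i-1)+1) - L (i-1) with hc
  have hii : (i-1)+1 = i := by omega
  have hupper : ∑ j ∈ Finset.range i, (L (j+1) - L j) ≤ (i : ℝ) * c := by
    have h := Finset.sum_le_card_nsmul (Finset.range i) (fun j => L (j+1) - L j) c
      (fun j hj => hmono j (i-1) (by simp at hj; omega) (by omega))
    simpa [Finset.card_range, nsmul_eq_mul] using h
  have hlower : ((s:ℝ) - i) * c ≤ ∑ j ∈ Finset.Ico i s, (L (j+1) - L j) := by
    have h := Finset.card_nsmul_le_sum (Finset.Ico i s) (fun j => L (j+1) - L j) c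
      (fun j hj => by
        obtain ⟨h1, h2⟩ := Finset.mem_Ico.mp hj
        exact hmono (i-1) j (by omega) (by omega))
    have hcard : ((Finset.Ico i s).card : ℝ) = (s:ℝ) - i := by
      rw [Nat.card_Ico]; push_cast [Nat.cast_sub his]; ring
    calc ((s:ℝ) - i) * c = ((Finset.Ico i s).card : ℝ) * c := by rw [hcard]
      _ ≤ _ := by simpa [nsmul_eq_mul] using h
  have hsplit : ∑ j ∈ Finset.range i, (L (j+1) - L j) + ∑ j ∈ Finset.Ico i s, (L (j+1) - L j)
      = L s - L 0 := by
    rw [Finset.sum_range_add_sum_Ico _ his, Finset.sum_range_sub]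
  have hLi : L i - L 0 = ∑ j ∈ Finset.range i, (L (j+1) - L j) :=
    (Finset.sum_range_sub L i).symm
  have hkey : (s:ℝ) * L i ≤ ((s:ℝ) - i) * L 0 + (i:ℝ) * L s := by
    set S1 := ∑ j ∈ Finset.range i, (L (j+1) - L j) with hS1
    set S2 := ∑ j ∈ Finset.Ico i s, (L (j+1) - L j) with hS2
    have hsi : (0:ℝ) ≤ (s:ℝ) - i := by
      have : (i:ℝ) ≤ s := by exact_mod_cast his
      linarith
    have hi0 : (0:ℝ) ≤ (i:ℝ) := by positivity
    have h1 : ((s:ℝ) - i) * S1 ≤ ((s:ℝ) - i) * ((i:ℝ) * c) :=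
      mul_le_mul_of_nonneg_left hupper hsi
    have h2 : (i:ℝ) * (((s:ℝ) - i) * c) ≤ (i:ℝ) * S2 :=
      mul_le_mul_of_nonneg_left hlower hi0
    have h3 : ((s:ℝ) - i) * ((i:ℝ) * c) = (i:ℝ) * (((s:ℝ) - i) * c) := by ring
    nlinarith [h1, h2, h3, hLi, hsplit]
  have hfin : Real.log (Gfun y s i ^ s) ≤ Real.log (Gfun y s 0 ^ (s-i) * Gfun y s s ^ i) := by
    rw [Real.log_pow, Real.log_mul (pow_ne_zero _ (hGpos 0 (by omega)).ne')
      (pow_ne_zero _ (hGpos s le_rfl).ne'), Real.log_pow, Real.log_pow]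
    have hsi : ((s - i : ℕ):ℝ) = (s:ℝ) - i := by push_cast [Nat.cast_sub his]; ring
    rw [hsi]
    simp only [hL] at hkey
    exact hkey
  have hpos1 : 0 < Gfun y s i ^ s := pow_pos (hGpos i his) s
  have hpos2 : 0 < Gfun y s 0 ^ (s-i) * Gfun y s s ^ i :=
    mul_pos (pow_pos (hGpos 0 (by omega)) _) (pow_pos (hGpos s le_rfl) _)
  exact (Real.log_le_log_iff hpos1 hpos2).mp hfin

/-- For all `y ∈ [0,1]` and integers `0 ≤ i ≤ s`,
`(2 + 2y^i - 4y^s + y^(2s-i))^s ≤ (2 - y^s)^(2s-i)`. -/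
theorem technical_inequality (y : ℝ) (hy : y ∈ Set.Icc (0 : ℝ) 1)
    (i s : ℕ) (his : i ≤ s) :
    (2 + 2 * y ^ i - 4 * y ^ s + y ^ (2 * s - i)) ^ s ≤
      (2 - y ^ s) ^ (2 * s - i) := by
  obtain ⟨hy0, hy1⟩ := hy
  rcases Nat.eq_zero_or_pos s with hs | hs
  · have hi : i = 0 := by omega
    subst hi; subst hs; simp
  rcases Nat.eq_zero_or_pos i with hi | hi
  · subst hi
    have h1 : y^(2*s-0) = (y^s)^2 := by rw [Nat.sub_zero]; exact pow_mul' y 2 s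
    have h2 : (2 + 2 * y ^ 0 - 4 * y ^ s + y ^ (2*s-0)) = (2 - y^s)^2 := by
      rw [pow_zero, h1]; ring
    rw [h2, ← pow_mul, Nat.sub_zero]
  rcases hy0.eq_or_lt with h0 | h0
  · subst h0
    rw [zero_pow (by omega : i ≠ 0), zero_pow (by omega : s ≠ 0),
      zero_pow (by omega : 2*s - i ≠ 0)]
    norm_num
    exact pow_le_pow_right₀ (by norm_num) (by omega)
  have h := Gfun_main y h0 hy1 s i hi his
  have hG0 : Gfun y s 0 = (2 - y^s)^2 := by
    unfold Gfun
    rw [pow_zero, Nat.sub_zero, pow_mul']; ring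
  have hGs : Gfun y s s = 2 - y^s := by
    unfold Gfun
    rw [show 2*s - s = s by omega]; ring
  rw [hG0, hGs, ← pow_mul, ← pow_add] at h
  rw [show 2*(s-i) + i = 2*s - i by omega] at h
  exact h
end

section
/- For all integers i, s with 0 < i < s and all real y ∈ [0,1], the strict inequality 4i − (4s − 2i)·y^{s−i} + (4s − 4i)·y^s > 0 holds. -/
/-- Key inequality (weighted AM-GM): for `y ∈ [0,1]`,
`(i+k) * y^k ≤ k * y^(i+k) + i`. -/
lemma key_amgm (k i : ℕ) (y : ℝ) (h0 : 0 ≤ y) (h1 : y ≤ 1) :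
    ((i : ℝ) + k) * y ^ k ≤ k * y ^ (i + k) + i := by
  -- 1 - y^i ≤ i * (1 - y)
  have hA : 1 - y ^ i ≤ (i : ℝ) * (1 - y) := by
    have h := one_add_mul_le_pow (a := y - 1) (by linarith) i
    have h2 : (1 + (y - 1)) ^ i = y ^ i := by ring_nf
    rw [h2] at h
    linarith
  -- k * y^k * (1 - y) ≤ 1 - y^k
  have hB : (k : ℝ) * y ^ k * (1 - y) ≤ 1 - y ^ k := by
    have hg : (1 - y) * ∑ j ∈ Finset.range k, y ^ j = 1 - y ^ k := by
      have := geom_sum_mul y k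
      ring_nf
      ring_nf at this
      linarith
    have hsum : (k : ℝ) * y ^ k ≤ ∑ j ∈ Finset.range k, y ^ j := by
      calc (k : ℝ) * y ^ k = ∑ _j ∈ Finset.range k, y ^ k := by
            simp [Finset.sum_const, mul_comm]
        _ ≤ ∑ j ∈ Finset.range k, y ^ j := by
            apply Finset.sum_le_sum
            intro j hj
            exact pow_le_pow_of_le_one h0 h1 (le_of_lt (Finset.mem_range.mp hj))
    nlinarith [mul_le_mul_of_nonneg_left hsum (by linarith : (0:ℝ) ≤ 1 - y)]
  have hyk : (0:ℝ) ≤ y ^ k := pow_nonneg h0 k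
  have hpow : y ^ (i + k) = y ^ i * y ^ k := pow_add y i k
  -- i * (1 - y^k) ≥ k * y^k * (1 - y^i)
  nlinarith [mul_le_mul_of_nonneg_left hA (mul_nonneg (Nat.cast_nonneg k : (0:ℝ) ≤ k) hyk),
    mul_le_mul_of_nonneg_left hB (Nat.cast_nonneg i : (0:ℝ) ≤ i)]

/-- For integers `0 < i < s` and real `y ∈ [0,1]`,
`4i - (4s - 2i) y^(s-i) + (4s - 4i) y^s > 0`. -/
theorem h2_pos (i s : ℕ) (hi : 0 < i) (his : i < s)
    (y : ℝ) (hy : y ∈ Set.Icc (0 : ℝ) 1) :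
    0 < 4 * (i : ℝ) - (4 * (s : ℝ) - 2 * (i : ℝ)) * y ^ (s - i)
        + (4 * (s : ℝ) - 4 * (i : ℝ)) * y ^ s := by
  obtain ⟨h0, h1⟩ := hy
  set k := s - i with hk
  have hsk : s = i + k := by omega
  have hkpos : 0 < k := by omega
  have hkey := key_amgm k i y h0 h1
  have hcast : (s : ℝ) = (i : ℝ) + k := by rw [hsk]; push_cast; ring
  have hys : y ^ s = y ^ (i + k) := by rw [hsk]
  rw [hys, hcast]
  have hy1 : (0:ℝ) ≤ y ^ (i + k) := pow_nonneg h0 _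
  have hipos : (0:ℝ) < i := by exact_mod_cast hi
  have hkpos' : (0:ℝ) < k := by exact_mod_cast hkpos
  nlinarith [mul_le_mul_of_nonneg_left hkey
      (by nlinarith : (0:ℝ) ≤ 4 * ((i:ℝ) + k) - 2 * i),
    mul_nonneg (mul_nonneg hipos.le hkpos'.le) hy1,
    mul_pos hipos hipos, mul_pos hipos hkpos']
end
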